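/- arXiv:2605.02191 — 6 statements merged into one kernel-verified Lean document; each statement's English description precedes it below -/
import Mathlib

section
/- Let B = (b_{ij}) be an n×n nonnegative irreducible real matrix with spectral radius λ₁(B) > 0, and let P = (p_{ij}) be an n×n Markov transition matrix (p_{ij} ≥ 0 and each row of P sums to 1) with a stationary distribution π (π_i ≥ 0, Σ_i π_i = 1, πP = π). Assume P is supported by B, i.e. p_{ij} > 0 implies b_{ij} > 0. Then ln λ₁(B) ≥ Σ_{i,j : p_{ij} > 0} π_i p_{ij} ln(b_{ij}/p_{ij}). -/
/-- The spectral radius (Perron root) of a real matrix, defined as the supremum of its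
real spectrum; for a nonnegative irreducible matrix this is the Perron root. -/
noncomputable def lam1 {n : Type*} [Fintype n] [DecidableEq n] (A : Matrix n n ℝ) : ℝ :=
  sSup (spectrum ℝ A)

/-- A nonnegative square matrix `B` is irreducible if for all indices `i j` there is a
power `k > 0` with `(B^k) i j > 0`. -/
def Matrix.IrreducibleMat {n : Type*} [Fintype n] [DecidableEq n] (B : Matrix n n ℝ) : Prop :=
  ∀ i j, ∃ k : ℕ, 0 < k ∧ 0 < (B ^ k) i j

/-! If `x > 0` and `B x ≤ c x`, then in each row the Gibbs inequality (concavity of `log`) gives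
`∑ⱼ pᵢⱼ log (bᵢⱼ xⱼ / pᵢⱼ) ≤ log (c xᵢ)`. Averaging over `π`, stationarity makes the
`log x` terms cancel, leaving the entropy sum `≤ log c`. We take `c = λ₁(B)` and for `x` a
positive eigenvector of `B`, whose eigenvalue lies in the spectrum and so is at most `λ₁(B)`.
Such an `x` maximises the Collatz–Wielandt function `y ↦ minᵢ (B y)ᵢ / yᵢ` over the image of
the simplex under a positive matrix `M` commuting with `B` (a sum of powers of `B`). -/

open Finset Matrix

namespace Matrix

variable {n : Type*} [Fintype n]

theorem mulVec_pos_of_pos {M : Matrix n n ℝ} (hM : ∀ i j, 0 < M i j) {z : n → ℝ} (hz : 0 ≤ z)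
    (hz0 : z ≠ 0) (i : n) : 0 < (M *ᵥ z) i := by
  obtain ⟨j, hj⟩ := Function.ne_iff.1 hz0
  exact sum_pos' (fun l _ => mul_nonneg (hM i l).le (hz l))
    ⟨j, mem_univ j, mul_pos (hM i j) ((hz j).lt_of_ne' hj)⟩

theorem IsIrreducible.exists_pos_commute [DecidableEq n] {A : Matrix n n ℝ}
    (hA : A.IsIrreducible) : ∃ M : Matrix n n ℝ, (∀ i j, 0 < M i j) ∧ Commute M A := by
  choose k _ hk using (isIrreducible_iff_exists_pow_pos hA.nonneg).1 hA
  obtain ⟨K, hK⟩ := Finite.exists_le fun ij : n × n => k ij.1 ij.2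
  refine ⟨∑ t ∈ range (K + 1), A ^ t, fun i j => ?_,
    Commute.sum_left _ _ _ fun t _ => (Commute.refl A).pow_left t⟩
  rw [sum_apply]
  exact (hk i j).trans_le <| single_le_sum (fun t _ => pow_apply_nonneg hA.nonneg t i j)
    (mem_range_succ_iff.2 (hK (i, j)))

theorem mem_spectrum_of_mulVec_eq_smul [DecidableEq n] {A : Matrix n n ℝ} {x : n → ℝ} {r : ℝ}
    (hx : x ≠ 0) (h : A *ᵥ x = r • x) : r ∈ spectrum ℝ A := by
  rw [← spectrum_toLin']
  exact (Module.End.hasEigenvalue_of_hasEigenvector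
    ⟨Module.End.mem_eigenspace_iff.2 (by simpa using h), hx⟩).mem_spectrum

variable [Nonempty n]

noncomputable def collatzWielandt (A : Matrix n n ℝ) (y : n → ℝ) : ℝ :=
  univ.inf' univ_nonempty fun i => (A *ᵥ y) i / y i

variable {A : Matrix n n ℝ} {y : n → ℝ}

theorem collatzWielandt_mul_le (hy : ∀ i, 0 < y i) (i : n) :
    collatzWielandt A y * y i ≤ (A *ᵥ y) i :=
  (le_div_iff₀ (hy i)).1 (inf'_le _ (mem_univ i))

theorem lt_collatzWielandt {r : ℝ} (hy : ∀ i, 0 < y i) (h : ∀ i, r * y i < (A *ᵥ y) i) :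
    r < collatzWielandt A y :=
  (lt_inf'_iff _).2 fun i _ => (lt_div_iff₀ (hy i)).2 (h i)

theorem collatzWielandt_smul {c : ℝ} (hc : c ≠ 0) :
    collatzWielandt A (c • y) = collatzWielandt A y := by
  simp only [collatzWielandt, mulVec_smul, Pi.smul_apply, smul_eq_mul, mul_div_mul_left _ _ hc]

theorem continuousOn_collatzWielandt :
    ContinuousOn (collatzWielandt A) {y | ∀ i, 0 < y i} :=
  ContinuousOn.finset_inf'_apply univ_nonempty fun i _ =>
    ContinuousOn.div (f := fun y => (A *ᵥ y) i)
      ((continuous_apply i).comp (continuous_const.matrix_mulVec continuous_id)).continuousOn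
      (continuous_apply i).continuousOn fun _ hy => (hy i).ne'

theorem IsIrreducible.exists_pos_mulVec_eq_smul [DecidableEq n] (hA : A.IsIrreducible) :
    ∃ x : n → ℝ, (∀ i, 0 < x i) ∧ ∃ r : ℝ, A *ᵥ x = r • x := by
  obtain ⟨M, hM, hMA⟩ := hA.exists_pos_commute
  have hsimplex : ∀ u ∈ stdSimplex ℝ n, ∀ i, 0 < (M *ᵥ u) i := fun u hu =>
    mulVec_pos_of_pos hM hu.1 fun h => by simpa [h] using hu.2
  obtain ⟨u, hu, hmax⟩ := (isCompact_stdSimplex ℝ n).exists_isMaxOn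
    ⟨_, single_mem_stdSimplex ℝ (Classical.arbitrary n)⟩
    (continuousOn_collatzWielandt.comp (continuous_const.matrix_mulVec continuous_id).continuousOn
      hsimplex)
  set x := M *ᵥ u
  have hx : ∀ i, 0 < x i := hsimplex u hu
  set r := collatzWielandt A x
  refine ⟨x, hx, r, ?_⟩
  by_contra hne
  -- Otherwise `M` makes the defect `A x - r x ≥ 0` strictly positive, and `M x` beats `x`.
  set z := A *ᵥ x - r • x
  have hz : 0 ≤ z := fun i => sub_nonneg.2 (by simpa [mul_comm] using collatzWielandt_mul_le hx i)
  have hy : ∀ i, 0 < (M *ᵥ x) i := mulVec_pos_of_pos hM (fun i => (hx i).le) fun h => by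
    simpa [h] using hx (Classical.arbitrary n)
  have hAy : A *ᵥ (M *ᵥ x) = r • (M *ᵥ x) + M *ᵥ z := by
    rw [mulVec_mulVec, ← hMA.eq, ← mulVec_mulVec, mulVec_sub, mulVec_smul, add_sub_cancel]
  have hlt : r < collatzWielandt A (M *ᵥ x) := lt_collatzWielandt hy fun i => by
    simpa [hAy] using mulVec_pos_of_pos hM hz (sub_ne_zero.2 hne) i
  have hsum : 0 < ∑ i, x i := sum_pos (fun i _ => hx i) univ_nonempty
  have hv : (∑ i, x i)⁻¹ • x ∈ stdSimplex ℝ n :=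
    ⟨fun i => smul_nonneg (inv_nonneg.2 hsum.le) (hx i).le, by
      simp [← mul_sum, inv_mul_cancel₀ hsum.ne']⟩
  have hle : collatzWielandt A (M *ᵥ ((∑ i, x i)⁻¹ • x)) ≤ r := hmax hv
  rw [mulVec_smul, collatzWielandt_smul (inv_ne_zero hsum.ne')] at hle
  exact hlt.not_ge hle

end Matrix

namespace Real

theorem sum_mul_log_div_le_log {ι : Type*} [Fintype ι] {p a : ι → ℝ} {c : ℝ} (hp : ∀ j, 0 ≤ p j)
    (hp1 : ∑ j, p j = 1) (ha : ∀ j, 0 ≤ a j) (hpa : ∀ j, 0 < p j → 0 < a j) (hac : ∑ j, a j ≤ c) :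
    ∑ j, (if 0 < p j then p j * log (a j / p j) else 0) ≤ log c := by
  rw [← sum_filter]
  set s := univ.filter fun j => 0 < p j
  have hps : ∑ j ∈ s, p j = 1 := by
    rw [sum_filter_of_ne fun j _ hj => (hp j).lt_of_ne' hj, hp1]
  have hjensen := strictConcaveOn_log_Ioi.concaveOn.le_map_sum (t := s) (w := p)
    (p := fun j => a j / p j) (fun j _ => hp j) hps
    fun j hj => div_pos (hpa j (mem_filter.1 hj).2) (mem_filter.1 hj).2
  simp only [smul_eq_mul] at hjensen
  rw [sum_congr rfl fun j hj => mul_div_cancel₀ (a j) (mem_filter.1 hj).2.ne'] at hjensen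
  refine hjensen.trans (log_le_log ?_ ((sum_le_univ_sum_of_nonneg ha).trans hac))
  obtain ⟨j, hj⟩ := nonempty_of_sum_ne_zero (hps.trans_ne one_ne_zero)
  exact sum_pos (fun j hj => hpa j (mem_filter.1 hj).2) ⟨j, hj⟩

theorem sum_mul_log_div_add_sum_mul_log_le {ι : Type*} [Fintype ι] {p b x : ι → ℝ} {c y : ℝ}
    (hp : ∀ j, 0 ≤ p j) (hp1 : ∑ j, p j = 1) (hb : ∀ j, 0 ≤ b j) (hpb : ∀ j, 0 < p j → 0 < b j)
    (hx : ∀ j, 0 < x j) (hy : 0 < y) (hbx : ∑ j, b j * x j ≤ c * y) :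
    ∑ j, (if 0 < p j then p j * log (b j / p j) else 0) + ∑ j, p j * log (x j) ≤
      log c + log y := by
  obtain ⟨k, -, hk⟩ := exists_lt_of_sum_lt (by simp [hp1] : ∑ j : ι, (0 : ℝ) < ∑ j, p j)
  have hc : 0 < c := pos_of_mul_pos_left ((sum_pos' (fun j _ => mul_nonneg (hb j) (hx j).le)
    ⟨k, mem_univ k, mul_pos (hpb k hk) (hx k)⟩).trans_le hbx) hy.le
  have hgibbs := sum_mul_log_div_le_log hp hp1 (fun j => mul_nonneg (hb j) (hx j).le)
    (fun j hj => mul_pos (hpb j hj) (hx j)) hbx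
  rw [log_mul hc.ne' hy.ne'] at hgibbs
  rw [← sum_add_distrib]
  refine (sum_congr rfl fun j _ => ?_).le.trans hgibbs
  split_ifs with hj
  · rw [mul_div_right_comm, log_mul (div_pos (hpb j hj) hj).ne' (hx j).ne']
    ring
  · simp [le_antisymm (not_lt.1 hj) (hp j)]

end Real

theorem sum_ite_mul_log_div_le_log_of_mulVec_le {n : Type*} [Fintype n] {B P : Matrix n n ℝ}
    {π x : n → ℝ} {c : ℝ} (hB : ∀ i j, 0 ≤ B i j) (hP : ∀ i j, 0 ≤ P i j)
    (hProw : ∀ i, ∑ j, P i j = 1) (hπ : ∀ i, 0 ≤ π i) (hπsum : ∑ i, π i = 1)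
    (hstat : ∀ j, ∑ i, π i * P i j = π j) (hsupp : ∀ i j, 0 < P i j → 0 < B i j)
    (hx : ∀ i, 0 < x i) (hBx : ∀ i, (B *ᵥ x) i ≤ c * x i) :
    ∑ i, ∑ j, (if 0 < P i j then π i * P i j * Real.log (B i j / P i j) else 0) ≤ Real.log c := by
  have hrow i := Real.sum_mul_log_div_add_sum_mul_log_le (hP i) (hProw i) (hB i) (hsupp i) hx (hx i)
    (hBx i)
  have hflow : ∑ i, π i * ∑ j, P i j * Real.log (x j) = ∑ j, π j * Real.log (x j) := by
    simp_rw [mul_sum, ← mul_assoc]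
    rw [sum_comm]
    simp_rw [← sum_mul, hstat]
  calc ∑ i, ∑ j, (if 0 < P i j then π i * P i j * Real.log (B i j / P i j) else 0)
      = ∑ i, π i * ∑ j, (if 0 < P i j then P i j * Real.log (B i j / P i j) else 0) := by
        simp_rw [mul_sum, mul_ite, mul_zero, mul_assoc]
    _ ≤ ∑ i, π i * (Real.log c + Real.log (x i) - ∑ j, P i j * Real.log (x j)) :=
        sum_le_sum fun i _ => mul_le_mul_of_nonneg_left (by linarith [hrow i]) (hπ i)
    _ = Real.log c := by
        simp only [mul_sub, mul_add, sum_sub_distrib, sum_add_distrib, ← sum_mul, hπsum, hflow]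
        ring

theorem log_lam1_ge_entropy_sum_general
    {n : Type*} [Fintype n] [DecidableEq n]
    (B P : Matrix n n ℝ) (π : n → ℝ)
    (hBnonneg : ∀ i j, 0 ≤ B i j)
    (hBirr : B.IrreducibleMat)
    (hPnonneg : ∀ i j, 0 ≤ P i j)
    (hProw : ∀ i, ∑ j, P i j = 1)
    (hπnonneg : ∀ i, 0 ≤ π i)
    (hπsum : ∑ i, π i = 1)
    (hstat : ∀ j, ∑ i, π i * P i j = π j)
    (hsupp : ∀ i j, 0 < P i j → 0 < B i j) :
    Real.log (lam1 B) ≥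
      ∑ i, ∑ j, if 0 < P i j then π i * P i j * Real.log (B i j / P i j) else 0 := by
  have : Nonempty n := by
    by_contra h
    simp [not_nonempty_iff.1 h] at hπsum
  obtain ⟨x, hx, r, hxr⟩ :=
    ((isIrreducible_iff_exists_pow_pos hBnonneg).2 hBirr).exists_pos_mulVec_eq_smul
  have hr : r ≤ lam1 B := le_csSup B.finite_spectrum.bddAbove <|
    mem_spectrum_of_mulVec_eq_smul (fun h => by simpa [h] using hx (Classical.arbitrary n)) hxr
  refine sum_ite_mul_log_div_le_log_of_mulVec_le hBnonneg hPnonneg hProw hπnonneg hπsum hstat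
    hsupp hx fun i => ?_
  rw [hxr]
  exact mul_le_mul_of_nonneg_right hr (hx i).le

/-- Entropy-type estimate: if `B` is nonnegative irreducible with `λ₁(B) > 0`, `P` is a
Markov transition matrix with stationary distribution `π`, and `P` is supported by `B`
(`p_{ij} > 0 → b_{ij} > 0`), then
`ln λ₁(B) ≥ ∑_{i,j : p_{ij} > 0} π_i p_{ij} ln(b_{ij}/p_{ij})`. -/
theorem log_lam1_ge_entropy_sum
    {n : Type*} [Fintype n] [DecidableEq n]
    (B P : Matrix n n ℝ) (π : n → ℝ)
    (hBnonneg : ∀ i j, 0 ≤ B i j)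
    (hBirr : B.IrreducibleMat)
    (hBpos : 0 < lam1 B)
    (hPnonneg : ∀ i j, 0 ≤ P i j)
    (hProw : ∀ i, ∑ j, P i j = 1)
    (hπnonneg : ∀ i, 0 ≤ π i)
    (hπsum : ∑ i, π i = 1)
    (hstat : ∀ j, ∑ i, π i * P i j = π j)
    (hsupp : ∀ i j, 0 < P i j → 0 < B i j) :
    Real.log (lam1 B) ≥
      ∑ i, ∑ j, if 0 < P i j then π i * P i j * Real.log (B i j / P i j) else 0 :=
  log_lam1_ge_entropy_sum_general B P π hBnonneg hBirr hPnonneg hProw hπnonneg hπsum hstat hsupp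
end

section
/- Let G be a connected finite simple graph with adjacency matrix A, spectral radius λ₁(A) > 0, and positive Perron eigenvector x normalized so that Σ_i x_i² = 1. Let π_i = x_i², let k ≥ 0 be an integer, and let z = A^k·𝟏 (so z_i = w_{k+1}(v_i) > 0). Then Σ_{i=1}^n π_i ln z_i ≥ k · ln λ₁(A). -/
open Finset Real

/-- Jensen step: one application of the matrix increases the weighted log-sum
by at least `log lam`. -/
lemma jensen_step {V : Type*} [Fintype V]
    (A : Matrix V V ℝ) (hA : ∀ i j, 0 ≤ A i j) (hsymm : ∀ i j, A i j = A j i)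
    (lam : ℝ) (hlam : 0 < lam)
    (x : V → ℝ) (hx : ∀ i, 0 < x i)
    (heig : ∀ i, ∑ j, A i j * x j = lam * x i)
    (hnorm : ∑ i, x i ^ 2 = 1)
    (z : V → ℝ) (hz : ∀ j, 0 < z j)
    (hAz : ∀ i, 0 < ∑ j, A i j * z j) :
    ∑ i, x i ^ 2 * Real.log (∑ j, A i j * z j)
      ≥ ∑ i, x i ^ 2 * Real.log (z i) + Real.log lam := by
  set L : V → ℝ := fun j => Real.log (z j) - Real.log (x j) with hL
  have key : ∀ i, ∑ j, (A i j * x j / (lam * x i)) * L j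
      ≤ Real.log (∑ j, A i j * z j) - Real.log (lam * x i) := by
    intro i
    have hxi := hx i
    have hli : 0 < lam * x i := by positivity
    have hjensen := (strictConcaveOn_log_Ioi.concaveOn).le_map_sum
      (t := Finset.univ) (w := fun j => A i j * x j / (lam * x i))
      (p := fun j => z j / x j)
      (fun j _ => div_nonneg (mul_nonneg (hA i j) (hx j).le) hli.le)
      (by
        rw [← Finset.sum_div, heig i, div_self hli.ne'])
      (fun j _ => by have := hz j; have := hx j; exact Set.mem_Ioi.2 (by positivity))
    have hsum : ∑ j, (A i j * x j / (lam * x i)) • (z j / x j)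
        = (∑ j, A i j * z j) / (lam * x i) := by
      simp only [smul_eq_mul]
      rw [Finset.sum_div]
      refine Finset.sum_congr rfl fun j _ => ?_
      have hxj := (hx j).ne'
      field_simp
    have hlog : ∀ j, Real.log (z j / x j) = L j := fun j =>
      Real.log_div (hz j).ne' (hx j).ne'
    rw [hsum] at hjensen
    calc ∑ j, (A i j * x j / (lam * x i)) * L j
        = ∑ j, (A i j * x j / (lam * x i)) • Real.log (z j / x j) := by
          refine Finset.sum_congr rfl fun j _ => ?_
          rw [hlog j, smul_eq_mul]
      _ ≤ Real.log ((∑ j, A i j * z j) / (lam * x i)) := hjensen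
      _ = Real.log (∑ j, A i j * z j) - Real.log (lam * x i) :=
          Real.log_div (hAz i).ne' hli.ne'
  -- multiply by x i ^ 2 and sum
  have hmul : ∑ i, x i ^ 2 * (∑ j, (A i j * x j / (lam * x i)) * L j)
      ≤ ∑ i, x i ^ 2 * (Real.log (∑ j, A i j * z j) - Real.log (lam * x i)) :=
    Finset.sum_le_sum fun i _ => mul_le_mul_of_nonneg_left (key i) (by positivity)
  -- compute LHS
  have hLHS : ∑ i, x i ^ 2 * (∑ j, (A i j * x j / (lam * x i)) * L j)
      = ∑ j, x j ^ 2 * L j := by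
    have h1 : ∀ i, x i ^ 2 * (∑ j, (A i j * x j / (lam * x i)) * L j)
        = ∑ j, (A i j * x i * x j * L j) / lam := by
      intro i
      rw [Finset.mul_sum]
      refine Finset.sum_congr rfl fun j _ => ?_
      have hxi := (hx i).ne'
      field_simp
    calc ∑ i, x i ^ 2 * (∑ j, (A i j * x j / (lam * x i)) * L j)
        = ∑ i, ∑ j, (A i j * x i * x j * L j) / lam := by
          exact Finset.sum_congr rfl fun i _ => h1 i
      _ = ∑ j, ∑ i, (A i j * x i * x j * L j) / lam := Finset.sum_comm
      _ = ∑ j, x j ^ 2 * L j := by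
          refine Finset.sum_congr rfl fun j _ => ?_
          have : ∑ i, (A i j * x i * x j * L j) / lam
              = (∑ i, A j i * x i) * (x j * L j) / lam := by
            rw [Finset.sum_mul, Finset.sum_div]
            refine Finset.sum_congr rfl fun i _ => ?_
            rw [hsymm i j]; ring
          rw [this, heig j]
          field_simp
  -- compute RHS
  have hRHS : ∑ i, x i ^ 2 * (Real.log (∑ j, A i j * z j) - Real.log (lam * x i))
      = ∑ i, x i ^ 2 * Real.log (∑ j, A i j * z j) - Real.log lam
        - ∑ i, x i ^ 2 * Real.log (x i) := by
    have : ∀ i, x i ^ 2 * (Real.log (∑ j, A i j * z j) - Real.log (lam * x i))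
        = x i ^ 2 * Real.log (∑ j, A i j * z j) - x i ^ 2 * Real.log lam
          - x i ^ 2 * Real.log (x i) := by
      intro i
      rw [Real.log_mul hlam.ne' (hx i).ne']
      ring
    rw [Finset.sum_congr rfl fun i _ => this i]
    rw [Finset.sum_sub_distrib, Finset.sum_sub_distrib, ← Finset.sum_mul, hnorm, one_mul]
  have hLeq : ∑ j, x j ^ 2 * L j
      = ∑ i, x i ^ 2 * Real.log (z i) - ∑ i, x i ^ 2 * Real.log (x i) := by
    rw [← Finset.sum_sub_distrib]
    refine Finset.sum_congr rfl fun j _ => ?_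
    simp [hL]; ring
  rw [hLHS, hRHS, hLeq] at hmul
  linarith


/-- Let `G` be a connected graph on `n ≥ 2` vertices with adjacency matrix `A`,
`λ₁(A) > 0`, and positive Perron eigenvector `x` with `∑ x_i² = 1`.  With `π_i = x_i²`
and `z = A^k·𝟏` (which has positive coordinates), we have
`∑_i π_i ln z_i ≥ k ln λ₁(A)`. -/
theorem stationary_log_walk_bound
    {V : Type*} [Fintype V] [DecidableEq V] (G : SimpleGraph V) [DecidableRel G.Adj]
    (hG : G.Connected) (hn : 2 ≤ Fintype.card V)
    (hpos : 0 < lam1 (G.adjMatrix ℝ))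
    (x : V → ℝ) (hx : ∀ i, 0 < x i)
    (heig : Matrix.mulVec (G.adjMatrix ℝ) x = lam1 (G.adjMatrix ℝ) • x)
    (hnorm : ∑ i, x i ^ 2 = 1)
    (k : ℕ) (z : V → ℝ)
    (hz : z = Matrix.mulVec ((G.adjMatrix ℝ) ^ k) (fun _ => 1))
    (hzpos : ∀ i, 0 < z i) :
    ∑ i, x i ^ 2 * Real.log (z i) ≥ (k : ℝ) * Real.log (lam1 (G.adjMatrix ℝ)) := by
  classical
  set A := G.adjMatrix ℝ with hA
  set lam := lam1 A with hlamdef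
  have hAnn : ∀ i j, 0 ≤ A i j := by
    intro i j; simp [hA, SimpleGraph.adjMatrix]
    split <;> norm_num
  have hAsymm : ∀ i j, A i j = A j i := by
    intro i j; simp [hA, SimpleGraph.adjMatrix, SimpleGraph.adj_comm]
  have heig' : ∀ i, ∑ j, A i j * x j = lam * x i := by
    intro i
    have := congrFun heig i
    simpa [Matrix.mulVec, dotProduct] using this
  have hadj : ∀ i : V, ∃ j, G.Adj i j := by
    intro i
    obtain ⟨j, hj⟩ := Fintype.exists_ne_of_one_lt_card (by omega) i
    obtain ⟨w⟩ := hG.preconnected i j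
    cases w with
    | nil => exact absurd rfl hj
    | cons h p => exact ⟨_, h⟩
  have hstep_pos : ∀ (z : V → ℝ), (∀ j, 0 < z j) → ∀ i, 0 < ∑ j, A i j * z j := by
    intro z hzp i
    obtain ⟨j, hj⟩ := hadj i
    refine Finset.sum_pos' (fun j _ => mul_nonneg (hAnn i j) (hzp j).le) ⟨j, Finset.mem_univ j, ?_⟩
    have : A i j = 1 := by simp [hA, hj]
    rw [this, one_mul]; exact hzp j
  -- main induction
  have main : ∀ m : ℕ, (∀ j, 0 < ((A ^ m).mulVec (fun _ => 1)) j) ∧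
      ∑ i, x i ^ 2 * Real.log (((A ^ m).mulVec (fun _ => 1)) i)
        ≥ (m : ℝ) * Real.log lam := by
    intro m
    induction m with
    | zero =>
      constructor
      · intro j; simp [Matrix.one_mulVec]
      · simp [Matrix.one_mulVec]
    | succ m ih =>
      obtain ⟨ihpos, ihsum⟩ := ih
      set w : V → ℝ := (A ^ m).mulVec (fun _ => 1) with hw
      have hrw : (A ^ (m + 1)).mulVec (fun _ => 1) = A.mulVec w := by
        rw [hw, pow_succ', ← Matrix.mulVec_mulVec]
      have hAw : ∀ i, (A.mulVec w) i = ∑ j, A i j * w j := by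
        intro i; simp [Matrix.mulVec, dotProduct]
      constructor
      · intro j
        rw [hrw, hAw]
        exact hstep_pos w ihpos j
      · have hj := jensen_step A hAnn hAsymm lam hpos x hx heig' hnorm w ihpos
          (hstep_pos w ihpos)
        rw [hrw]
        have : ∑ i, x i ^ 2 * Real.log ((A.mulVec w) i)
            = ∑ i, x i ^ 2 * Real.log (∑ j, A i j * w j) := by
          refine Finset.sum_congr rfl fun i _ => by rw [hAw i]
        rw [this]
        push_cast
        calc ((m : ℝ) + 1) * Real.log lam = (m : ℝ) * Real.log lam + Real.log lam := by ring
          _ ≤ ∑ i, x i ^ 2 * Real.log (w i) + Real.log lam := by linarith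
          _ ≤ ∑ i, x i ^ 2 * Real.log (∑ j, A i j * w j) := hj
  rw [hz]
  exact (main k).2
end

section
/- Let G be a finite simple graph with at least one edge, clique number ω(G) = ω, and let r ≥ 1 be an integer. If ω > 2 and G is the disjoint union of a regular complete ω-partite graph and possibly some isolated vertices, then λ₁(G)^r = Σ_{v ∈ V(G)} w_r(v)·(c_G(v) − 1)/c_G(v). Likewise, if ω = 2 and G is the disjoint union of a complete bipartite graph and possibly some isolated vertices, where the complete bipartite component is additionally regular when r is odd, then the same equality holds. -/
/-- `localCliqueNum G v` is the maximum size of a clique of `G` containing `v`. -/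
noncomputable def localCliqueNum {V : Type*} (G : SimpleGraph V) (v : V) : ℕ :=
  sSup {k | ∃ s : Finset V, G.IsNClique k s ∧ v ∈ s}

/-- `walkCount G r v` is the number of walks with `r` vertices starting at `v`,
i.e. `(A(G)^(r-1) · 𝟏)_v`. -/
noncomputable def walkCount {V : Type*} [Fintype V] [DecidableEq V] (G : SimpleGraph V)
    [DecidableRel G.Adj] (r : ℕ) (v : V) : ℝ :=
  Matrix.mulVec ((G.adjMatrix ℝ) ^ (r - 1)) (fun _ => 1) v

/-- The clique number of `G`: the maximum size of a clique of `G`. -/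
noncomputable def cliqueNumber {V : Type*} (G : SimpleGraph V) : ℕ :=
  sSup {k | ∃ s : Finset V, G.IsNClique k s}

/-- `G` is the disjoint union of a regular complete `k`-partite graph (on the vertex set
`W`, whose parts are the fibers of the coloring `f` and all have the same size `t > 0`)
together with some isolated vertices (the vertices outside `W`). -/
def IsRegularCompleteMultipartitePlusIsolated {V : Type*} [DecidableEq V]
    (G : SimpleGraph V) (k : ℕ) : Prop :=
  ∃ (W : Finset V) (t : ℕ) (f : V → Fin k),
    0 < t ∧
    (∀ v ∈ W, ∃ u, G.Adj v u) ∧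
    (∀ u v, G.Adj u v ↔ (u ∈ W ∧ v ∈ W ∧ f u ≠ f v)) ∧
    (∀ i : Fin k, (W.filter fun v => f v = i).card = t)

/-- `G` is the disjoint union of the complete bipartite graph with (nonempty) parts
`A` and `B` together with some isolated vertices (the vertices outside `A ∪ B`). -/
def IsCompleteBipartitePlusIsolated {V : Type*} [DecidableEq V]
    (G : SimpleGraph V) (A B : Finset V) : Prop :=
  A.Nonempty ∧ B.Nonempty ∧ Disjoint A B ∧
  (∀ u v, G.Adj u v ↔ ((u ∈ A ∧ v ∈ B) ∨ (u ∈ B ∧ v ∈ A)))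


/-!
On its non-isolated vertices the walk vector of `G` is explicit. For a regular complete
`k`-partite graph with parts of size `t`, the indicator of its vertex set `W` is an eigenvector of
`A(G)` for `d = (k - 1) t`, so `w_r = d ^ (r - 1)` on `W`; for `K_{a,b}` on `A ∪ B`, the indicator
of `A ∪ B` is an eigenvector of `A(G)²` for `a b`, which gives the walk counts in closed form.
An eigenvector together with a Gershgorin bound on the row sums of `A(G)` (resp. `A(G)²`) pins
down `λ₁ = d` (resp. `λ₁ = √(a b)`). Local clique numbers are `k` (resp. `2`) on the non-isolated
vertices and `1` on isolated ones, which therefore contribute nothing, and the sum evaluates to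
`λ₁ ^ r`; in the bipartite case with `r` odd this uses `a = b`.
-/

open Matrix Finset

section Spectral

variable {n : Type*} [Fintype n] [DecidableEq n]

theorem Matrix.pow_mulVec_of_mulVec_eq_smul {R : Type*} [CommSemiring R] {M : Matrix n n R}
    {x : n → R} {μ : R} (h : M *ᵥ x = μ • x) (m : ℕ) : M ^ m *ᵥ x = μ ^ m • x := by
  induction m with
  | zero => simp
  | succ m ih => rw [pow_succ, ← mulVec_mulVec, h, mulVec_smul, ih, smul_smul, pow_succ']

theorem Matrix.abs_le_mulVec_one_of_hasEigenvalue {M : Matrix n n ℝ} (hM : ∀ i j, 0 ≤ M i j)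
    {ν : ℝ} (hν : Module.End.HasEigenvalue (toLin' M) ν) : ∃ i, |ν| ≤ (M *ᵥ 1) i := by
  obtain ⟨i, hi⟩ := eigenvalue_mem_ball hν
  refine ⟨i, ?_⟩
  rw [Metric.mem_closedBall, Real.dist_eq] at hi
  have hrow : (M *ᵥ 1) i = M i i + ∑ j ∈ univ.erase i, ‖M i j‖ := by
    simp only [Real.norm_of_nonneg (hM i _), add_sum_erase _ _ (mem_univ i)]
    simp [mulVec, dotProduct]
  calc |ν| ≤ |M i i| + |ν - M i i| := by simpa using abs_add_le (M i i) (ν - M i i)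
    _ ≤ (M *ᵥ 1) i := by rw [hrow, abs_of_nonneg (hM i i)]; linarith

/-- Any real eigenvalue `ν` of `M` yields the eigenvalue `ν ^ p` of `M ^ p`, which Gershgorin's
theorem bounds by a row sum of `M ^ p`. -/
theorem lam1_eq_of_mulVec_eq_smul {M : Matrix n n ℝ} (hM : ∀ i j, 0 ≤ M i j) {μ : ℝ} (hμ : 0 ≤ μ)
    {x : n → ℝ} (hx : x ≠ 0) (hMx : M *ᵥ x = μ • x) {p : ℕ} (hp : p ≠ 0)
    (hrow : ∀ i, (M ^ p *ᵥ 1) i ≤ μ ^ p) : lam1 M = μ := by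
  refine IsGreatest.csSup_eq ⟨?_, fun ν hν => ?_⟩
  · rw [← spectrum_toLin', ← Module.End.hasEigenvalue_iff_mem_spectrum]
    exact Module.End.hasEigenvalue_of_hasEigenvector
      (Module.End.hasEigenvector_iff.2 ⟨Module.End.mem_eigenspace_iff.2 (by simpa using hMx), hx⟩)
  · rw [← spectrum_toLin', ← Module.End.hasEigenvalue_iff_mem_spectrum] at hν
    have hνp : Module.End.HasEigenvalue (toLin' (M ^ p)) (ν ^ p) := by
      rw [toLin'_pow]; exact hν.pow p
    obtain ⟨i, hi⟩ := abs_le_mulVec_one_of_hasEigenvalue (pow_apply_nonneg hM p) hνp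
    have hpow : |ν| ^ p ≤ μ ^ p := by rw [← abs_pow]; exact hi.trans (hrow i)
    exact (le_abs_self ν).trans ((pow_le_pow_iff_left₀ (abs_nonneg ν) hμ hp).1 hpow)

end Spectral

theorem Finset.card_eq_mul_of_card_fiber_eq {V : Type*} {W : Finset V} {k t : ℕ} {f : V → Fin k}
    (hcard : ∀ i, #{v ∈ W | f v = i} = t) : #W = k * t := by
  rw [card_eq_sum_card_fiberwise (t := univ) fun v _ => mem_univ (f v)]
  simp [hcard]

theorem Finset.card_filter_ne_of_card_fiber_eq {V : Type*} {W : Finset V} {k t : ℕ}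
    {f : V → Fin k} (hcard : ∀ i, #{v ∈ W | f v = i} = t) (i : Fin k) :
    (#{v ∈ W | f v ≠ i} : ℝ) = ((k : ℝ) - 1) * t := by
  have hsplit := card_filter_add_card_filter_not (s := W) (fun v => f v = i)
  rw [hcard, card_eq_mul_of_card_fiber_eq hcard] at hsplit
  have : (#{v ∈ W | f v ≠ i} : ℝ) = k * t - t := by
    rw [eq_sub_iff_add_eq, add_comm]; exact_mod_cast hsplit
  rw [this]; ring

section CompleteBipartite

variable {V : Type*} [DecidableEq V] {G : SimpleGraph V} {A B : Finset V}

theorem IsCompleteBipartitePlusIsolated.symm (hG : IsCompleteBipartitePlusIsolated G A B) :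
    IsCompleteBipartitePlusIsolated G B A :=
  ⟨hG.2.1, hG.1, hG.2.2.1.symm, fun u v => (hG.2.2.2 u v).trans or_comm⟩

theorem IsCompleteBipartitePlusIsolated.mem_union_of_adj
    (hG : IsCompleteBipartitePlusIsolated G A B) {u v : V} (h : G.Adj u v) : u ∈ A ∪ B := by
  rcases (hG.2.2.2 u v).1 h with ⟨hu, -⟩ | ⟨hu, -⟩ <;> simp [hu]

theorem IsCompleteBipartitePlusIsolated.indicator_union
    (hG : IsCompleteBipartitePlusIsolated G A B) :
    ((A ∪ B : Finset V) : Set V).indicator (1 : V → ℝ) =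
      (A : Set V).indicator 1 + (B : Set V).indicator 1 := by
  rw [coe_union, Set.indicator_union_of_disjoint (disjoint_coe.2 hG.2.2.1)]
  rfl

theorem IsCompleteBipartitePlusIsolated.exists_adj (hG : IsCompleteBipartitePlusIsolated G A B)
    {v : V} (hv : v ∈ A ∪ B) : ∃ u, G.Adj v u := by
  obtain ⟨⟨a, ha⟩, ⟨b, hb⟩, -, hadj⟩ := hG
  rcases mem_union.1 hv with hv | hv
  exacts [⟨b, (hadj v b).2 (Or.inl ⟨hv, hb⟩)⟩, ⟨a, (hadj v a).2 (Or.inr ⟨hv, ha⟩)⟩]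

end CompleteBipartite

namespace SimpleGraph

theorem adjMatrix_nonneg {V : Type*} {G : SimpleGraph V} [DecidableRel G.Adj] (i j : V) :
    0 ≤ G.adjMatrix ℝ i j := by
  rw [adjMatrix_apply]; split_ifs <;> norm_num

section Cliques

variable {V : Type*} (G : SimpleGraph V)

theorem bddAbove_cliqueSizes [Fintype V] : BddAbove {k | ∃ s : Finset V, G.IsNClique k s} :=
  ⟨Fintype.card V, fun _ ⟨s, hs⟩ => hs.card_eq ▸ card_le_univ s⟩

theorem bddAbove_cliqueSizes_containing [Fintype V] (v : V) :
    BddAbove {k | ∃ s : Finset V, G.IsNClique k s ∧ v ∈ s} :=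
  ⟨Fintype.card V, fun _ ⟨s, hs, _⟩ => hs.card_eq ▸ card_le_univ s⟩

theorem one_mem_cliqueSizes_containing (v : V) :
    1 ∈ {k | ∃ s : Finset V, G.IsNClique k s ∧ v ∈ s} :=
  ⟨{v}, isNClique_singleton.2 rfl, mem_singleton_self v⟩

theorem localCliqueNum_le_cliqueNumber [Fintype V] (v : V) : localCliqueNum G v ≤ cliqueNumber G :=
  csSup_le_csSup (bddAbove_cliqueSizes G) ⟨1, one_mem_cliqueSizes_containing G v⟩
    fun _ ⟨s, hs, _⟩ => ⟨s, hs⟩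

variable {G}

theorem IsNClique.le_localCliqueNum [Fintype V] {n : ℕ} {s : Finset V} (hs : G.IsNClique n s)
    {v : V} (hv : v ∈ s) : n ≤ localCliqueNum G v :=
  le_csSup (bddAbove_cliqueSizes_containing G v) ⟨s, hs, hv⟩

theorem two_le_localCliqueNum [Fintype V] [DecidableEq V] {u v : V} (h : G.Adj v u) :
    2 ≤ localCliqueNum G v :=
  ((isNClique_singleton.2 rfl).insert (by simpa using h)).le_localCliqueNum (mem_insert_self v {u})

theorem localCliqueNum_eq_one {v : V} (hv : ∀ u, ¬G.Adj v u) : localCliqueNum G v = 1 := by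
  refine IsGreatest.csSup_eq ⟨one_mem_cliqueSizes_containing G v, ?_⟩
  rintro n ⟨s, hs, hvs⟩
  have hsv : ∀ w ∈ s, w = v := fun w hw =>
    by_contra fun hne => hv w (hs.isClique hvs hw (Ne.symm hne))
  rw [← hs.card_eq, card_le_one]
  intro a ha b hb
  rw [hsv a ha, hsv b hb]

end Cliques

section Walks

variable {V : Type*} [Fintype V] [DecidableEq V] {G : SimpleGraph V} [DecidableRel G.Adj]

theorem adjMatrix_mulVec_indicator_apply (S : Finset V) (v : V) :
    (G.adjMatrix ℝ *ᵥ (S : Set V).indicator 1) v = #{u ∈ S | G.Adj v u} := by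
  simp only [mulVec, dotProduct, adjMatrix_apply, Set.indicator_apply, mem_coe, Pi.one_apply,
    ite_mul, one_mul, zero_mul, ← ite_and, sum_boole]
  congr 2
  ext u
  simp [and_comm]

theorem adjMatrix_pow_succ_mulVec_one {S : Finset V} (hS : ∀ u v, G.Adj u v → u ∈ S) (m : ℕ) :
    G.adjMatrix ℝ ^ (m + 1) *ᵥ 1 = G.adjMatrix ℝ ^ (m + 1) *ᵥ (S : Set V).indicator 1 := by
  rw [pow_succ, ← mulVec_mulVec, ← mulVec_mulVec]
  congr 1
  ext v
  have hone := adjMatrix_mulVec_indicator_apply (G := G) univ v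
  rw [coe_univ, Set.indicator_univ] at hone
  rw [hone, adjMatrix_mulVec_indicator_apply]
  congr 2
  ext u
  simpa using fun h : G.Adj v u => hS u v h.symm

theorem walkCount_eq_of_mem {S : Finset V} (hS : ∀ u v, G.Adj u v → u ∈ S) (r : ℕ) {v : V}
    (hv : v ∈ S) : walkCount G r v = (G.adjMatrix ℝ ^ (r - 1) *ᵥ (S : Set V).indicator 1) v := by
  rw [walkCount]
  cases r - 1 with
  | zero => simp [hv]
  | succ m => exact congrFun (adjMatrix_pow_succ_mulVec_one hS m) v

theorem sum_walkCount_mul_eq_sum_of_adj_mem {S : Finset V} (hS : ∀ u v, G.Adj u v → u ∈ S)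
    (r : ℕ) :
    ∑ v, walkCount G r v * (((localCliqueNum G v : ℝ) - 1) / localCliqueNum G v) =
      ∑ v ∈ S, walkCount G r v * (((localCliqueNum G v : ℝ) - 1) / localCliqueNum G v) := by
  refine (sum_subset (subset_univ S) fun v _ hv => ?_).symm
  rw [localCliqueNum_eq_one fun u h => hv (hS v u h)]
  simp

end Walks

section Multipartite

variable {V : Type*} [Fintype V] {G : SimpleGraph V} {W : Finset V} {k t : ℕ} {f : V → Fin k}

theorem adjMatrix_mulVec_indicator_of_multipartite [DecidableEq V] [DecidableRel G.Adj]
    (hadj : ∀ u v, G.Adj u v ↔ u ∈ W ∧ v ∈ W ∧ f u ≠ f v)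
    (hcard : ∀ i, #{v ∈ W | f v = i} = t) :
    G.adjMatrix ℝ *ᵥ (W : Set V).indicator 1 = (((k : ℝ) - 1) * t) • (W : Set V).indicator 1 := by
  ext v
  rw [adjMatrix_mulVec_indicator_apply]
  by_cases hv : v ∈ W
  · have hN : ({u ∈ W | G.Adj v u} : Finset V) = {u ∈ W | f u ≠ f v} := by
      ext u; simp only [mem_filter, hadj]; tauto
    simp [hN, Finset.card_filter_ne_of_card_fiber_eq hcard, hv]
  · have hN : ({u ∈ W | G.Adj v u} : Finset V) = ∅ := by
      ext u; simp [hadj, hv]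
    simp [hN, hv]

theorem le_localCliqueNum_of_multipartite
    (hadj : ∀ u v, G.Adj u v ↔ u ∈ W ∧ v ∈ W ∧ f u ≠ f v)
    (hcard : ∀ i, #{v ∈ W | f v = i} = t) (ht : 0 < t) {v : V} (hv : v ∈ W) :
    k ≤ localCliqueNum G v := by
  have hpart : ∀ i, ∃ u ∈ W, f u = i := fun i => by
    obtain ⟨u, hu⟩ := card_pos.1 (hcard i ▸ ht : 0 < #{u ∈ W | f u = i})
    exact ⟨u, (mem_filter.1 hu).1, (mem_filter.1 hu).2⟩
  choose g hgW hgf using hpart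
  -- a transversal of the parts through `v`
  set g' := Function.update g (f v) v
  have hg'W : ∀ i, g' i ∈ W := fun i => by
    by_cases h : i = f v
    · subst h; simpa [g'] using hv
    · simpa [g', h] using hgW i
  have hg'f : ∀ i, f (g' i) = i := fun i => by
    by_cases h : i = f v
    · subst h; simp [g']
    · simpa [g', h] using hgf i
  let emb : (⊤ : SimpleGraph (Fin k)) →g G :=
    ⟨g', fun {i j} hij => (hadj _ _).2 ⟨hg'W i, hg'W j, by rwa [hg'f, hg'f]⟩⟩
  have hclique := isNClique_map_copy_top ⟨emb, Hom.injective_of_top_hom emb⟩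
  rw [Fintype.card_fin] at hclique
  exact hclique.le_localCliqueNum (mem_map.2 ⟨f v, mem_univ _, show g' (f v) = v by simp [g']⟩)

theorem lam1_pow_eq_sum_of_multipartite [DecidableEq V] [DecidableRel G.Adj]
    (hadj : ∀ u v, G.Adj u v ↔ u ∈ W ∧ v ∈ W ∧ f u ≠ f v)
    (hcard : ∀ i, #{v ∈ W | f v = i} = t) (ht : 0 < t) (hk : cliqueNumber G = k) (hk0 : 0 < k)
    {r : ℕ} (hr : 1 ≤ r) :
    lam1 (G.adjMatrix ℝ) ^ r =
      ∑ v, walkCount G r v * (((localCliqueNum G v : ℝ) - 1) / localCliqueNum G v) := by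
  have heig := adjMatrix_mulVec_indicator_of_multipartite hadj hcard
  set d : ℝ := ((k : ℝ) - 1) * t with hd
  have hd0 : 0 ≤ d := mul_nonneg (sub_nonneg.2 (by exact_mod_cast hk0)) t.cast_nonneg
  have hS : ∀ u v, G.Adj u v → u ∈ W := fun u v h => ((hadj u v).1 h).1
  have hlam : lam1 (G.adjMatrix ℝ) = d := by
    obtain ⟨w, hw⟩ : W.Nonempty :=
      (card_pos.1 (hcard ⟨0, hk0⟩ ▸ ht : 0 < #{v ∈ W | f v = ⟨0, hk0⟩})).mono (filter_subset _ _)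
    refine lam1_eq_of_mulVec_eq_smul adjMatrix_nonneg hd0 (fun h => ?_) heig one_ne_zero fun i => ?_
    · simpa [hw] using congrFun h w
    · rw [← zero_add 1, adjMatrix_pow_succ_mulVec_one hS, zero_add, pow_one, pow_one, heig]
      by_cases hi : i ∈ W <;> simp [hi, hd0]
  have hloc : ∀ v ∈ W, localCliqueNum G v = k := fun v hv =>
    (hk ▸ localCliqueNum_le_cliqueNumber G v).antisymm
      (le_localCliqueNum_of_multipartite hadj hcard ht hv)
  have hwalk : ∀ v ∈ W, walkCount G r v = d ^ (r - 1) := fun v hv => by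
    rw [walkCount_eq_of_mem hS r hv, pow_mulVec_of_mulVec_eq_smul heig]
    simp [hv]
  rw [sum_walkCount_mul_eq_sum_of_adj_mem hS,
    sum_congr rfl fun v hv => by rw [hwalk v hv, hloc v hv],
    sum_const, Finset.card_eq_mul_of_card_fiber_eq hcard, nsmul_eq_mul, hlam]
  obtain ⟨m, rfl⟩ := Nat.exists_eq_add_of_le' hr
  have hk0' : (k : ℝ) ≠ 0 := by exact_mod_cast hk0.ne'
  simp only [Nat.add_sub_cancel, hd]
  field_simp
  push_cast
  ring

end Multipartite

section Bipartite

variable {V : Type*} [Fintype V] [DecidableEq V] {G : SimpleGraph V} [DecidableRel G.Adj]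
  {A B : Finset V}

theorem adjMatrix_mulVec_indicator_of_bipartite (hG : IsCompleteBipartitePlusIsolated G A B) :
    G.adjMatrix ℝ *ᵥ (A : Set V).indicator 1 = (#A : ℝ) • (B : Set V).indicator 1 := by
  obtain ⟨-, -, hAB, hadj⟩ := hG
  ext v
  rw [adjMatrix_mulVec_indicator_apply]
  by_cases hv : v ∈ B
  · have hN : ({u ∈ A | G.Adj v u} : Finset V) = A := filter_true_of_mem fun u hu =>
      (hadj v u).2 (Or.inr ⟨hv, hu⟩)
    simp [hN, hv]
  · have hN : ({u ∈ A | G.Adj v u} : Finset V) = ∅ := filter_false_of_mem fun u hu h => by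
      rcases (hadj v u).1 h with ⟨-, hu'⟩ | ⟨hv', -⟩
      exacts [Finset.disjoint_left.1 hAB hu hu', hv hv']
    simp [hN, hv]

theorem adjMatrix_mulVec_indicator_union_of_bipartite
    (hG : IsCompleteBipartitePlusIsolated G A B) :
    G.adjMatrix ℝ *ᵥ ((A ∪ B : Finset V) : Set V).indicator 1 =
      (#B : ℝ) • (A : Set V).indicator 1 + (#A : ℝ) • (B : Set V).indicator 1 := by
  rw [hG.indicator_union, mulVec_add, adjMatrix_mulVec_indicator_of_bipartite hG,
    adjMatrix_mulVec_indicator_of_bipartite hG.symm, add_comm]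

theorem adjMatrix_sq_mulVec_indicator_union_of_bipartite
    (hG : IsCompleteBipartitePlusIsolated G A B) :
    G.adjMatrix ℝ ^ 2 *ᵥ ((A ∪ B : Finset V) : Set V).indicator 1 =
      ((#A : ℝ) * #B) • ((A ∪ B : Finset V) : Set V).indicator 1 := by
  rw [sq, ← mulVec_mulVec, adjMatrix_mulVec_indicator_union_of_bipartite hG, mulVec_add,
    mulVec_smul, mulVec_smul, adjMatrix_mulVec_indicator_of_bipartite hG,
    adjMatrix_mulVec_indicator_of_bipartite hG.symm, hG.indicator_union,
    smul_smul, smul_smul, smul_add, mul_comm (#B : ℝ), add_comm]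

theorem adjMatrix_mulVec_sqrt_of_bipartite (hG : IsCompleteBipartitePlusIsolated G A B) :
    G.adjMatrix ℝ *ᵥ (√(#B : ℝ) • (A : Set V).indicator 1 + √(#A : ℝ) • (B : Set V).indicator 1) =
      √(#A * #B) • (√(#B : ℝ) • (A : Set V).indicator 1 + √(#A : ℝ) • (B : Set V).indicator 1) := by
  rw [mulVec_add, mulVec_smul, mulVec_smul, adjMatrix_mulVec_indicator_of_bipartite hG,
    adjMatrix_mulVec_indicator_of_bipartite hG.symm, Real.sqrt_mul (Nat.cast_nonneg _)]
  ext v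
  have ha := Real.mul_self_sqrt (Nat.cast_nonneg (α := ℝ) #A)
  have hb := Real.mul_self_sqrt (Nat.cast_nonneg (α := ℝ) #B)
  simp only [Pi.add_apply, Pi.smul_apply, smul_eq_mul]
  linear_combination
    -((A : Set V).indicator 1 v * √(#A : ℝ)) * hb - ((B : Set V).indicator 1 v * √(#B : ℝ)) * ha

theorem walkCount_odd_of_bipartite (hG : IsCompleteBipartitePlusIsolated G A B) (j : ℕ) {v : V}
    (hv : v ∈ A ∪ B) : walkCount G (2 * j + 1) v = ((#A : ℝ) * #B) ^ j := by
  rw [walkCount_eq_of_mem (fun _ _ => hG.mem_union_of_adj) _ hv, Nat.add_sub_cancel, pow_mul,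
    pow_mulVec_of_mulVec_eq_smul (adjMatrix_sq_mulVec_indicator_union_of_bipartite hG),
    Pi.smul_apply, Set.indicator_of_mem (mem_coe.2 hv)]
  simp

theorem walkCount_even_of_bipartite (hG : IsCompleteBipartitePlusIsolated G A B) (j : ℕ) {v : V}
    (hv : v ∈ A) : walkCount G (2 * (j + 1)) v = ((#A : ℝ) * #B) ^ j * #B := by
  have hvB : v ∉ B := Finset.disjoint_left.1 hG.2.2.1 hv
  rw [walkCount_eq_of_mem (fun _ _ => hG.mem_union_of_adj) _ (mem_union_left B hv),
    show 2 * (j + 1) - 1 = 2 * j + 1 by omega, pow_succ', ← mulVec_mulVec, pow_mul,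
    pow_mulVec_of_mulVec_eq_smul (adjMatrix_sq_mulVec_indicator_union_of_bipartite hG),
    mulVec_smul, adjMatrix_mulVec_indicator_union_of_bipartite hG]
  simp [hv, hvB]

theorem lam1_eq_sqrt_of_bipartite (hG : IsCompleteBipartitePlusIsolated G A B) :
    lam1 (G.adjMatrix ℝ) = √(#A * #B) := by
  obtain ⟨a, ha⟩ := hG.1
  refine lam1_eq_of_mulVec_eq_smul adjMatrix_nonneg (Real.sqrt_nonneg _) (fun h => ?_)
    (adjMatrix_mulVec_sqrt_of_bipartite hG) two_ne_zero fun i => ?_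
  · have hvB : a ∉ B := Finset.disjoint_left.1 hG.2.2.1 ha
    have := congrFun h a
    simp [ha, hvB, hG.2.1.card_pos.ne'] at this
  · rw [show 2 = 1 + 1 from rfl, adjMatrix_pow_succ_mulVec_one (fun _ _ => hG.mem_union_of_adj),
      ← show 2 = 1 + 1 from rfl, adjMatrix_sq_mulVec_indicator_union_of_bipartite hG,
      Real.sq_sqrt (by positivity)]
    by_cases hi : i ∈ A ∪ B
    · rw [Pi.smul_apply, Set.indicator_of_mem (mem_coe.2 hi)]; simp
    · rw [Pi.smul_apply, Set.indicator_of_notMem (mt mem_coe.1 hi), smul_zero]; positivity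

theorem lam1_pow_eq_sum_of_bipartite (hG : IsCompleteBipartitePlusIsolated G A B)
    (hω : cliqueNumber G = 2) {r : ℕ} (hr : 1 ≤ r) (hreg : Odd r → #A = #B) :
    lam1 (G.adjMatrix ℝ) ^ r =
      ∑ v, walkCount G r v * (((localCliqueNum G v : ℝ) - 1) / localCliqueNum G v) := by
  have hloc : ∀ v ∈ A ∪ B, localCliqueNum G v = 2 := fun v hv =>
    (hω ▸ localCliqueNum_le_cliqueNumber G v).antisymm
      (two_le_localCliqueNum (hG.exists_adj hv).choose_spec)
  rw [sum_walkCount_mul_eq_sum_of_adj_mem (fun _ _ => hG.mem_union_of_adj),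
    sum_congr rfl fun v hv => by rw [hloc v hv], lam1_eq_sqrt_of_bipartite hG]
  rcases Nat.even_or_odd' r with ⟨j, rfl | rfl⟩
  · obtain ⟨i, rfl⟩ : ∃ i, j = i + 1 := ⟨j - 1, by omega⟩
    rw [sum_union hG.2.2.1,
      sum_congr (rfl : A = A) fun v hv => by rw [walkCount_even_of_bipartite hG i hv],
      sum_congr (rfl : B = B) fun v hv => by rw [walkCount_even_of_bipartite hG.symm i hv],
      sum_const, sum_const, pow_mul, Real.sq_sqrt (by positivity)]
    simp only [nsmul_eq_mul]
    ring
  · rw [sum_congr rfl fun v hv => by rw [walkCount_odd_of_bipartite hG j hv], sum_const,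
      card_union_of_disjoint hG.2.2.1, hreg ⟨j, rfl⟩, Real.sqrt_mul_self (Nat.cast_nonneg _)]
    simp only [nsmul_eq_mul]
    push_cast
    ring

end Bipartite

end SimpleGraph

theorem extremal_sufficiency_general
    {V : Type*} [Fintype V] [DecidableEq V] (G : SimpleGraph V) [DecidableRel G.Adj]
    (r : ℕ) (hr : 1 ≤ r)
    (h : (2 < cliqueNumber G ∧
            IsRegularCompleteMultipartitePlusIsolated G (cliqueNumber G)) ∨
         (cliqueNumber G = 2 ∧
            ∃ A B : Finset V, IsCompleteBipartitePlusIsolated G A B ∧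
              (Odd r → A.card = B.card))) :
    lam1 (G.adjMatrix ℝ) ^ r =
      ∑ v : V, walkCount G r v *
        (((localCliqueNum G v : ℝ) - 1) / (localCliqueNum G v : ℝ)) := by
  rcases h with ⟨hω, W, t, f, ht, -, hadj, hcard⟩ | ⟨hω, A, B, hG, hreg⟩
  · exact SimpleGraph.lam1_pow_eq_sum_of_multipartite hadj hcard ht rfl (by omega) hr
  · exact SimpleGraph.lam1_pow_eq_sum_of_bipartite hG hω hr hreg

/-- Sufficiency part of the extremal characterization: if `G` has at least one edge and
either `ω(G) > 2` and `G` is a regular complete `ω(G)`-partite graph plus isolated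
vertices, or `ω(G) = 2` and `G` is a complete bipartite graph plus isolated vertices
(regular when `r` is odd), then equality holds in the localized walk inequality. -/
theorem extremal_sufficiency
    {V : Type*} [Fintype V] [DecidableEq V] (G : SimpleGraph V) [DecidableRel G.Adj]
    (hedge : ∃ u v, G.Adj u v) (r : ℕ) (hr : 1 ≤ r)
    (h : (2 < cliqueNumber G ∧
            IsRegularCompleteMultipartitePlusIsolated G (cliqueNumber G)) ∨
         (cliqueNumber G = 2 ∧
            ∃ A B : Finset V, IsCompleteBipartitePlusIsolated G A B ∧
              (Odd r → A.card = B.card))) :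
    lam1 (G.adjMatrix ℝ) ^ r =
      ∑ v : V, walkCount G r v *
        (((localCliqueNum G v : ℝ) - 1) / (localCliqueNum G v : ℝ)) :=
  extremal_sufficiency_general G r hr h
end

section
/- Let G be a finite simple graph with at least one edge, and suppose that for every edge v_i v_j of G one has c_G(v_i) = c_G(v_i v_j) = c_G(v_j). If G is connected, then there is an integer q with c_G(v) = q for all vertices v and c_G(e) = q for all edges e, and q = ω(G), so that Σ_{v ∈ V(G)} w_r(v)·(c_G(v)−1)/c_G(v) = (1 − 1/ω(G))·w_r(G) for every integer r ≥ 1. -/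
/-- `edgeCliqueNum G u v` is the maximum size of a clique of `G` containing both
`u` and `v`. -/
noncomputable def edgeCliqueNum {V : Type*} (G : SimpleGraph V) (u v : V) : ℕ :=
  sSup {k | ∃ s : Finset V, G.IsNClique k s ∧ u ∈ s ∧ v ∈ s}

/-- If `G` is connected with at least one edge and `c_G(u) = c_G(uv) = c_G(v)` on every
edge `uv`, then there is a constant `q` with `c_G(v) = q` for all vertices and
`c_G(e) = q` for all edges, `q = ω(G)`, and hence
`∑_v w_r(v) (c_G(v)-1)/c_G(v) = (1 - 1/ω(G)) w_r(G)` for every `r ≥ 1`. -/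
theorem constant_local_clique_of_edge_local_equality
    {V : Type*} [Fintype V] [DecidableEq V] (G : SimpleGraph V) [DecidableRel G.Adj]
    (hconn : G.Connected) (hedge : ∃ u v, G.Adj u v)
    (h : ∀ u v, G.Adj u v →
        localCliqueNum G u = edgeCliqueNum G u v ∧
        edgeCliqueNum G u v = localCliqueNum G v) :
    ∃ q : ℕ,
      (∀ v, localCliqueNum G v = q) ∧
      (∀ u v, G.Adj u v → edgeCliqueNum G u v = q) ∧
      q = cliqueNumber G ∧
      (∀ r : ℕ, 1 ≤ r →
        ∑ v : V, walkCount G r v *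
            (((localCliqueNum G v : ℝ) - 1) / (localCliqueNum G v : ℝ)) =
          (1 - 1 / (cliqueNumber G : ℝ)) * ∑ v : V, walkCount G r v) := by

  classical
  obtain ⟨u0, v0, huv0⟩ := hedge
  -- boundedness of all clique-size sets
  have hcard : ∀ (k : ℕ) (s : Finset V), G.IsNClique k s → k ≤ Fintype.card V := by
    intro k s hs
    rw [← hs.card_eq]
    exact Finset.card_le_univ s
  have hbddL : ∀ v : V, BddAbove {k | ∃ s : Finset V, G.IsNClique k s ∧ v ∈ s} := by
    intro v
    exact ⟨Fintype.card V, fun k hk => by obtain ⟨s, hs, _⟩ := hk; exact hcard k s hs⟩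
  have hbddG : BddAbove {k | ∃ s : Finset V, G.IsNClique k s} :=
    ⟨Fintype.card V, fun k hk => by obtain ⟨s, hs⟩ := hk; exact hcard k s hs⟩
  have hv1 : ∀ v : V, G.IsNClique 1 {v} := by
    intro v
    constructor
    · simp [SimpleGraph.isClique_iff, Set.pairwise_singleton]
    · simp
  have hsingle : ∀ v : V, (1 : ℕ) ∈ {k | ∃ s : Finset V, G.IsNClique k s ∧ v ∈ s} :=
    fun v => ⟨{v}, hv1 v, by simp⟩
  have hneL : ∀ v : V, Set.Nonempty {k | ∃ s : Finset V, G.IsNClique k s ∧ v ∈ s} :=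
    fun v => ⟨1, hsingle v⟩
  have hneG : Set.Nonempty {k | ∃ s : Finset V, G.IsNClique k s} :=
    ⟨1, {u0}, hv1 u0⟩
  -- local clique number is constant along edges, hence everywhere
  have hadj : ∀ u v, G.Adj u v → localCliqueNum G u = localCliqueNum G v :=
    fun u v huv => (h u v huv).1.trans (h u v huv).2
  have hconst : ∀ u v, localCliqueNum G u = localCliqueNum G v := by
    intro u v
    obtain ⟨p⟩ := hconn u v
    induction p with
    | nil => rfl
    | cons h' p ih => exact (hadj _ _ h').trans ih
  set q := localCliqueNum G u0 with hq
  -- local ≤ global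
  have hle : ∀ v : V, localCliqueNum G v ≤ cliqueNumber G := by
    intro v
    apply csSup_le (hneL v)
    intro k hk
    obtain ⟨s, hs, _⟩ := hk
    exact le_csSup hbddG ⟨s, hs⟩
  -- a maximum clique exists and every vertex in it has full local clique number
  have hmem : cliqueNumber G ∈ {k | ∃ s : Finset V, G.IsNClique k s} :=
    Nat.sSup_mem hneG hbddG
  obtain ⟨s, hs⟩ := hmem
  have hspos : 0 < cliqueNumber G := by
    have : (1 : ℕ) ≤ cliqueNumber G := le_csSup hbddG ⟨{u0}, hv1 u0⟩
    omega
  have hsne : s.Nonempty := by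
    rw [← Finset.card_pos, hs.card_eq]; exact hspos
  obtain ⟨w, hw⟩ := hsne
  have hge : cliqueNumber G ≤ localCliqueNum G w :=
    le_csSup (hbddL w) ⟨s, hs, hw⟩
  have hqω : q = cliqueNumber G := by
    have h1 : localCliqueNum G w = q := hconst w u0
    have h2 : q ≤ cliqueNumber G := hle u0
    omega
  refine ⟨q, fun v => hconst v u0, ?_, hqω.symm ▸ rfl, ?_⟩
  · intro u v huv
    exact (h u v huv).1.symm.trans (hconst u u0)
  · intro r _
    have hqR : (q : ℝ) ≠ 0 := by
      have : 0 < q := by omega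
      positivity
    have hvq : ∀ v : V, localCliqueNum G v = q := fun v => hconst v u0
    have : ∀ v : V, ((localCliqueNum G v : ℝ) - 1) / (localCliqueNum G v : ℝ)
        = 1 - 1 / (cliqueNumber G : ℝ) := by
      intro v
      rw [hvq v, ← hqω]
      field_simp
    simp only [this]
    rw [← Finset.sum_mul, mul_comm]
end

section
/- Let G be a weighted graph with nonnegative edge weight μ(e) on each edge e, with weighted adjacency matrix A(G) and spectral radius λ₁(G). Then λ₁(G) ≤ sqrt( 2 · Σ_{e ∈ E(G)} ((c_G(e) − 1)/c_G(e)) · μ(e)² ), where c_G(e) is the local clique number of the edge e computed in the support graph of G. -/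
/-- The support graph of a weighted graph with weight function `μ`: vertices are
adjacent when they are distinct and joined by an edge of nonzero weight. -/
def supportGraph {V : Type*} (μ : V → V → ℝ) : SimpleGraph V where
  Adj u v := u ≠ v ∧ (μ u v ≠ 0 ∨ μ v u ≠ 0)
  symm := ⟨fun u v h => ⟨h.1.symm, h.2.symm⟩⟩
  loopless := ⟨fun v h => h.1 rfl⟩

noncomputable instance {V : Type*} [DecidableEq V] (μ : V → V → ℝ) :
    DecidableRel (supportGraph μ).Adj :=
  fun u v => inferInstanceAs (Decidable (u ≠ v ∧ (μ u v ≠ 0 ∨ μ v u ≠ 0)))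

lemma edgeCliqueNum_comm {V : Type*} (G : SimpleGraph V) (u v : V) :
    edgeCliqueNum G u v = edgeCliqueNum G v u := by
  unfold edgeCliqueNum
  congr 1
  ext k
  exact ⟨fun ⟨s, hs, h1, h2⟩ => ⟨s, hs, h2, h1⟩, fun ⟨s, hs, h1, h2⟩ => ⟨s, hs, h2, h1⟩⟩

/-!
Let `x` be an eigenvector for the eigenvalue `λ`. By Cauchy–Schwarz with the weights
`(c - 1)/c` and `c/(c - 1)` on the edges,
`(λ ‖x‖²)² ≤ (∑ (c - 1)/c μ_uv²) · (∑ c/(c - 1) x_u² x_v²)`, the sums running over ordered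
adjacent pairs. The second factor is at most `‖x‖⁴` by the local Motzkin–Straus inequality
`∑ c(uv)/(c(uv) - 1) y_u y_v ≤ (∑ y)²` for `y ≥ 0`, proved by induction on the support of `y`:
if the support is a clique of size `k`, every weight on it is at most `k/(k - 1)` and
`(∑ y)² ≤ k ∑ y²` finishes; otherwise, for non-adjacent `u, v` in the support, moving all of
`y_v` onto `u` (the one of larger partial derivative) does not decrease the form, because the
form has no `y_u y_v` term, and shrinks the support.
-/

open Finset Matrix

namespace Matrix

variable {n R : Type*} [Fintype n]

lemma dotProduct_mulVec_eq_sum_sum [CommSemiring R] (A : Matrix n n R) (x y : n → R) :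
    x ⬝ᵥ A *ᵥ y = ∑ u, ∑ v, A u v * x u * y v := by
  simp only [dotProduct, mulVec, mul_sum]
  exact sum_congr rfl fun _ _ => sum_congr rfl fun _ _ => by ring

lemma IsSymm.dotProduct_mulVec_add_smul_single_sub_single [DecidableEq n] [CommRing R]
    {A : Matrix n n R} (hA : A.IsSymm) {u v : n} (hu : A u u = 0) (hv : A v v = 0)
    (huv : A u v = 0) (y : n → R) (t : R) :
    (y + t • (Pi.single u 1 - Pi.single v 1)) ⬝ᵥ A *ᵥ (y + t • (Pi.single u 1 - Pi.single v 1))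
      = y ⬝ᵥ A *ᵥ y + 2 * t * ((A *ᵥ y) u - (A *ᵥ y) v) := by
  have hvu : A v u = 0 := by rw [hA.apply u v, huv]
  set d : n → R := Pi.single u 1 - Pi.single v 1
  have hdy : y ⬝ᵥ A *ᵥ d = d ⬝ᵥ A *ᵥ y := by
    rw [dotProduct_mulVec, ← mulVec_transpose, hA.eq, dotProduct_comm]
  have hd : d ⬝ᵥ A *ᵥ y = (A *ᵥ y) u - (A *ᵥ y) v := by
    simp [d, sub_dotProduct]
  have hdd : d ⬝ᵥ A *ᵥ d = 0 := by
    simp [d, sub_dotProduct, mulVec_sub, hu, hv, huv, hvu]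
  simp only [mulVec_add, mulVec_smul, dotProduct_add, add_dotProduct, dotProduct_smul,
    smul_dotProduct, hdy, hd, hdd, smul_eq_mul]
  ring

lemma exists_mulVec_eq_smul_of_mem_spectrum [DecidableEq n] [Field R] {A : Matrix n n R}
    {r : R} (hr : r ∈ spectrum R A) : ∃ x ≠ 0, A *ᵥ x = r • x := by
  rw [← spectrum_toLin', ← Module.End.hasEigenvalue_iff_mem_spectrum] at hr
  obtain ⟨x, hx, hx0⟩ := hr.exists_hasEigenvector
  exact ⟨x, hx0, by simpa using Module.End.mem_eigenspace_iff.1 hx⟩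

end Matrix

lemma sum_sum_ite_eq_sq_sum_sub_sum_sq {ι : Type*} [Fintype ι] [DecidableEq ι] (y : ι → ℝ) :
    ∑ u, ∑ v, (if u = v then 0 else y u * y v) = (∑ w, y w) ^ 2 - ∑ w, y w ^ 2 := by
  rw [sq, sum_mul_sum, ← sum_sub_distrib]
  refine sum_congr rfl fun u _ => ?_
  have hsplit : ∀ v,
      (if u = v then 0 else y u * y v) = y u * y v - if u = v then y u * y v else 0 := by
    intro v
    split_ifs <;> ring
  simp only [hsplit, sum_sub_distrib, sum_ite_eq, mem_univ, if_true, sq]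

lemma natCast_sub_one_div_self_nonneg (n : ℕ) : 0 ≤ ((n : ℝ) - 1) / n := by
  rcases n.eq_zero_or_pos with rfl | hn
  · simp
  · exact div_nonneg (sub_nonneg.2 (Nat.one_le_cast.2 hn)) n.cast_nonneg

namespace SimpleGraph

variable {V : Type*} (G : SimpleGraph V)

lemma card_le_edgeCliqueNum [Fintype V] {s : Finset V} (hs : G.IsClique (s : Set V)) {u v : V}
    (hu : u ∈ s) (hv : v ∈ s) : #s ≤ edgeCliqueNum G u v :=
  le_csSup ⟨Fintype.card V, fun _ ⟨t, ht, _⟩ => ht.card_eq ▸ card_le_univ t⟩ ⟨s, ⟨hs, rfl⟩, hu, hv⟩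

lemma Adj.two_le_edgeCliqueNum [Fintype V] [DecidableEq V] {G : SimpleGraph V} {u v : V}
    (h : G.Adj u v) : 2 ≤ edgeCliqueNum G u v := by
  have hclique : G.IsClique ((({u, v} : Finset V)) : Set V) := by
    rw [coe_pair]
    exact isClique_pair.2 fun _ => h
  simpa [card_pair h.ne] using G.card_le_edgeCliqueNum hclique (mem_insert_self u {v})
    (mem_insert_of_mem (mem_singleton_self v))

section MotzkinStraus

variable [DecidableRel G.Adj]

noncomputable def motzkinStrausMatrix : Matrix V V ℝ :=
  of fun u v => if G.Adj u v then (edgeCliqueNum G u v : ℝ) / (edgeCliqueNum G u v - 1) else 0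

lemma motzkinStrausMatrix_isSymm : G.motzkinStrausMatrix.IsSymm := by
  ext u v
  simp only [motzkinStrausMatrix, transpose_apply, of_apply, G.adj_comm, edgeCliqueNum_comm]

lemma motzkinStrausMatrix_of_not_adj {u v : V} (h : ¬G.Adj u v) :
    G.motzkinStrausMatrix u v = 0 := if_neg h

lemma motzkinStrausMatrix_le_of_isClique [Fintype V] {s : Finset V} (hs : G.IsClique (s : Set V))
    {u v : V} (hu : u ∈ s) (hv : v ∈ s) (huv : u ≠ v) :
    G.motzkinStrausMatrix u v ≤ (#s : ℝ) / (#s - 1) := by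
  have hk : (2 : ℝ) ≤ #s := by exact_mod_cast one_lt_card.2 ⟨u, hu, v, hv, huv⟩
  have hc : (#s : ℝ) ≤ edgeCliqueNum G u v := by exact_mod_cast G.card_le_edgeCliqueNum hs hu hv
  rw [motzkinStrausMatrix, of_apply, if_pos (hs hu hv huv),
    div_le_div_iff₀ (by linarith) (by linarith)]
  nlinarith

variable [Fintype V] [DecidableEq V]

lemma dotProduct_mulVec_le_sq_sum_of_isClique {y : V → ℝ} (hy : 0 ≤ y) {s : Finset V}
    (hs : G.IsClique (s : Set V)) (hys : ∀ w ∉ s, y w = 0) :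
    y ⬝ᵥ G.motzkinStrausMatrix *ᵥ y ≤ (∑ w, y w) ^ 2 := by
  set K : ℝ := #s / (#s - 1)
  have hpoint : ∀ u v, G.motzkinStrausMatrix u v * y u * y v
      ≤ K * (if u = v then 0 else y u * y v) := by
    intro u v
    by_cases hu : u ∈ s
    · by_cases hv : v ∈ s
      · split_ifs with huv
        · simp [huv, motzkinStrausMatrix_of_not_adj]
        · rw [mul_assoc]
          exact mul_le_mul_of_nonneg_right (G.motzkinStrausMatrix_le_of_isClique hs hu hv huv)
            (mul_nonneg (hy u) (hy v))
      · simp [hys v hv]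
    · simp [hys u hu]
  have hcard : (∑ w, y w) ^ 2 ≤ #s * ∑ w, y w ^ 2 := by
    rw [← sum_subset (subset_univ s) fun w _ hw => hys w hw,
      ← sum_subset (subset_univ s) fun w _ hw => by simp [hys w hw]]
    exact sq_sum_le_card_mul_sum_sq
  calc y ⬝ᵥ G.motzkinStrausMatrix *ᵥ y
      ≤ K * ((∑ w, y w) ^ 2 - ∑ w, y w ^ 2) := by
        rw [dotProduct_mulVec_eq_sum_sum, ← sum_sum_ite_eq_sq_sum_sub_sum_sq, mul_sum]
        exact sum_le_sum fun u _ => (sum_le_sum fun v _ => hpoint u v).trans_eq (mul_sum ..).symm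
    _ ≤ (∑ w, y w) ^ 2 := by
        rcases lt_or_ge #s 2 with hk | hk
        · interval_cases h : #s <;> simp [K, h, sq_nonneg]
        · have hk' : (2 : ℝ) ≤ #s := by exact_mod_cast hk
          have hK : K * (#s - 1) = #s := div_mul_cancel₀ _ (by linarith)
          nlinarith [sum_nonneg fun w (_ : w ∈ univ) => sq_nonneg (y w)]

lemma exists_shift_of_not_adj {y : V → ℝ} (hy : 0 ≤ y) {u v : V} (hu : y u ≠ 0) (hv : y v ≠ 0)
    (huv : u ≠ v) (hadj : ¬G.Adj u v)
    (hyuv : (G.motzkinStrausMatrix *ᵥ y) v ≤ (G.motzkinStrausMatrix *ᵥ y) u) :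
    ∃ z : V → ℝ, 0 ≤ z ∧ ∑ w, z w = ∑ w, y w ∧ #{w | z w ≠ 0} < #{w | y w ≠ 0} ∧
      y ⬝ᵥ G.motzkinStrausMatrix *ᵥ y ≤ z ⬝ᵥ G.motzkinStrausMatrix *ᵥ z := by
  set z := y + y v • (Pi.single u 1 - Pi.single v 1)
  have hz : ∀ w, z w = if w = u then y u + y v else if w = v then 0 else y w := by
    intro w
    by_cases hwu : w = u
    · simp [z, hwu, huv.symm]
    · by_cases hwv : w = v
      · subst hwv
        simp [z, hwu]
      · simp [z, hwu, hwv]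
  refine ⟨z, fun w => ?_, ?_, ?_, ?_⟩
  · rw [hz]
    split_ifs
    exacts [add_nonneg (hy u) (hy v), le_rfl, hy w]
  · simp [z, sum_add_distrib, ← mul_sum]
  · refine (card_le_card fun w hw => ?_).trans_lt (card_erase_lt_of_mem (by simpa using hv))
    simp only [mem_filter, mem_univ, true_and, mem_erase, hz] at hw ⊢
    split_ifs at hw with hwu hwv
    exacts [⟨hwu ▸ huv, hwu ▸ hu⟩, absurd rfl hw, ⟨hwv, hw⟩]
  · rw [G.motzkinStrausMatrix_isSymm.dotProduct_mulVec_add_smul_single_sub_single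
      (motzkinStrausMatrix_of_not_adj _ G.irrefl)
      (motzkinStrausMatrix_of_not_adj _ G.irrefl) (motzkinStrausMatrix_of_not_adj _ hadj)]
    nlinarith [mul_nonneg (hy v) (sub_nonneg.2 hyuv)]

theorem dotProduct_motzkinStrausMatrix_mulVec_le {y : V → ℝ} (hy : 0 ≤ y) :
    y ⬝ᵥ G.motzkinStrausMatrix *ᵥ y ≤ (∑ w, y w) ^ 2 := by
  induction hn : #{w | y w ≠ 0} using Nat.strong_induction_on generalizing y with
  | _ n ih =>
  by_cases hclique : G.IsClique ({w | y w ≠ 0} : Set V)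
  · exact G.dotProduct_mulVec_le_sq_sum_of_isClique hy (s := {w | y w ≠ 0})
      (by simpa using hclique) (fun w hw => by simpa using hw)
  obtain ⟨u, hu, v, hv, huv, hadj⟩ : ∃ u, y u ≠ 0 ∧ ∃ v, y v ≠ 0 ∧ u ≠ v ∧ ¬G.Adj u v := by
    simpa [IsClique, Set.Pairwise] using hclique
  have hshift := fun {u v} hu hv huv hadj hyuv =>
    (G.exists_shift_of_not_adj hy (u := u) (v := v) hu hv huv hadj hyuv).elim
      fun z ⟨hz, hsum, hcard, hle⟩ => hle.trans (hsum ▸ ih _ (hn ▸ hcard) hz rfl)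
  rcases le_total ((G.motzkinStrausMatrix *ᵥ y) v) ((G.motzkinStrausMatrix *ᵥ y) u) with h | h
  · exact hshift hu hv huv hadj h
  · exact hshift hv hu huv.symm (fun h' => hadj h'.symm) h

lemma sq_sum_abs_mul_le (μ : V → V → ℝ) (hμ : ∀ u v, ¬G.Adj u v → μ u v = 0) (x : V → ℝ) :
    (∑ u, ∑ v, |μ u v * x u * x v|) ^ 2 ≤
      (∑ u, ∑ v, if G.Adj u v then
        ((edgeCliqueNum G u v : ℝ) - 1) / edgeCliqueNum G u v * μ u v ^ 2 else 0) *
      (x ^ 2 ⬝ᵥ G.motzkinStrausMatrix *ᵥ x ^ 2) := by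
  have hpoint : ∀ u v,
      0 ≤ (if G.Adj u v then
        ((edgeCliqueNum G u v : ℝ) - 1) / edgeCliqueNum G u v * μ u v ^ 2 else 0) ∧
      0 ≤ G.motzkinStrausMatrix u v * (x ^ 2) u * (x ^ 2) v ∧
      |μ u v * x u * x v| ^ 2 ≤ (if G.Adj u v then
        ((edgeCliqueNum G u v : ℝ) - 1) / edgeCliqueNum G u v * μ u v ^ 2 else 0) *
        (G.motzkinStrausMatrix u v * (x ^ 2) u * (x ^ 2) v) := by
    intro u v
    by_cases h : G.Adj u v
    · have hc : (2 : ℝ) ≤ edgeCliqueNum G u v := by exact_mod_cast h.two_le_edgeCliqueNum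
      have hinv : ((edgeCliqueNum G u v : ℝ) - 1) / edgeCliqueNum G u v *
          (edgeCliqueNum G u v / (edgeCliqueNum G u v - 1)) = 1 := by
        field_simp [show (edgeCliqueNum G u v : ℝ) - 1 ≠ 0 by linarith]
      simp only [motzkinStrausMatrix, of_apply, if_pos h, Pi.pow_apply]
      have hw : 0 ≤ (edgeCliqueNum G u v : ℝ) / (edgeCliqueNum G u v - 1) :=
        div_nonneg (by linarith) (by linarith)
      refine ⟨mul_nonneg (natCast_sub_one_div_self_nonneg _) (sq_nonneg _),
        mul_nonneg (mul_nonneg hw (sq_nonneg _)) (sq_nonneg _), le_of_eq ?_⟩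
      rw [sq_abs]
      linear_combination (-(μ u v * x u * x v) ^ 2) * hinv
    · simp [h, hμ u v h, motzkinStrausMatrix_of_not_adj]
  rw [dotProduct_mulVec_eq_sum_sum, ← sum_product', ← sum_product', ← sum_product']
  exact sum_sq_le_sum_mul_sum_of_sq_le_mul _ (fun p _ => (hpoint p.1 p.2).1)
    (fun p _ => (hpoint p.1 p.2).2.1) (fun p _ => (hpoint p.1 p.2).2.2)

lemma le_sqrt_of_mem_spectrum (μ : V → V → ℝ) (hμ : ∀ u v, ¬G.Adj u v → μ u v = 0) {r : ℝ}
    (hr : r ∈ spectrum ℝ (of μ)) :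
    r ≤ √(∑ u, ∑ v, if G.Adj u v then
      ((edgeCliqueNum G u v : ℝ) - 1) / edgeCliqueNum G u v * μ u v ^ 2 else 0) := by
  obtain ⟨x, hx0, hAx⟩ := exists_mulVec_eq_smul_of_mem_spectrum hr
  set T := ∑ u, ∑ v, if G.Adj u v then
    ((edgeCliqueNum G u v : ℝ) - 1) / edgeCliqueNum G u v * μ u v ^ 2 else 0
  have hT : 0 ≤ T := sum_nonneg fun u _ => sum_nonneg fun v _ => by
    split_ifs
    exacts [mul_nonneg (natCast_sub_one_div_self_nonneg _) (sq_nonneg _), le_rfl]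
  have hrN : |r * (x ⬝ᵥ x)| ≤ ∑ u, ∑ v, |μ u v * x u * x v| := by
    rw [← smul_eq_mul, ← dotProduct_smul, ← hAx, dotProduct_mulVec_eq_sum_sum]
    exact (abs_sum_le_sum_abs _ _).trans (sum_le_sum fun u _ => abs_sum_le_sum_abs _ _)
  have hMS : x ^ 2 ⬝ᵥ G.motzkinStrausMatrix *ᵥ x ^ 2 ≤ (x ⬝ᵥ x) ^ 2 := by
    have hsum : ∑ w, (x ^ 2) w = x ⬝ᵥ x := by simp [dotProduct, sq]
    exact hsum ▸ G.dotProduct_motzkinStrausMatrix_mulVec_le fun w => sq_nonneg (x w)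
  have hsq : r ^ 2 * (x ⬝ᵥ x) ^ 2 ≤ T * (x ⬝ᵥ x) ^ 2 := calc
    r ^ 2 * (x ⬝ᵥ x) ^ 2 = |r * (x ⬝ᵥ x)| ^ 2 := by rw [sq_abs, mul_pow]
    _ ≤ (∑ u, ∑ v, |μ u v * x u * x v|) ^ 2 := pow_le_pow_left₀ (abs_nonneg _) hrN 2
    _ ≤ T * (x ^ 2 ⬝ᵥ G.motzkinStrausMatrix *ᵥ x ^ 2) := G.sq_sum_abs_mul_le μ hμ x
    _ ≤ T * (x ⬝ᵥ x) ^ 2 := mul_le_mul_of_nonneg_left hMS hT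
  have hN : 0 < (x ⬝ᵥ x) ^ 2 := pow_two_pos_of_ne_zero (dotProduct_self_eq_zero.not.2 hx0)
  exact (le_abs_self r).trans (Real.abs_le_sqrt (le_of_mul_le_mul_right hsq hN))

end MotzkinStraus

lemma sum_adj_eq_two_mul_sum_edgeFinset [Fintype V] [DecidableEq V] [DecidableRel G.Adj]
    {R : Type*} [NonAssocSemiring R] (f : V → V → R) (hf : ∀ u v, f u v = f v u) :
    ∑ u, ∑ v, (if G.Adj u v then f u v else 0)
      = 2 * ∑ e ∈ G.edgeFinset, Sym2.lift ⟨f, hf⟩ e := by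
  have hdarts : ∑ u, ∑ v, (if G.Adj u v then f u v else 0)
      = ∑ d : G.Dart, Sym2.lift ⟨f, hf⟩ d.edge := by
    rw [← sum_product', ← sum_filter]
    exact sum_bij' (fun p hp => ⟨p, (mem_filter.1 hp).2⟩) (fun d _ => d.toProd)
      (by simp) (by simp [Dart.adj]) (by simp) (by simp) (by simp)
  rw [hdarts, ← sum_fiberwise_of_maps_to' (t := G.edgeFinset)
    (fun d _ => mem_edgeFinset.2 d.edge_mem), mul_sum]
  refine sum_congr rfl fun e he => ?_
  rw [sum_const, G.dart_edge_fiber_card e (mem_edgeFinset.1 he), nsmul_eq_mul, Nat.cast_ofNat]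

end SimpleGraph

/-- Weighted local spectral Turán theorem (Liu–Ning): for a weighted graph with
nonnegative symmetric weights `μ` (and zero diagonal), the spectral radius of the
weighted adjacency matrix satisfies
`λ₁(G) ≤ √(2 ∑_{e ∈ E} ((c_G(e) - 1)/c_G(e)) μ(e)²)`,
where `c_G(e)` is computed in the support graph. -/
theorem weighted_local_spectral_turan
    {V : Type*} [Fintype V] [DecidableEq V] (μ : V → V → ℝ)
    (hsym : ∀ u v, μ u v = μ v u)
    (hdiag : ∀ v, μ v v = 0) :
    lam1 (Matrix.of μ) ≤
      Real.sqrt (2 * ∑ e ∈ (supportGraph μ).edgeFinset,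
        Sym2.lift ⟨fun u v =>
            (((edgeCliqueNum (supportGraph μ) u v : ℝ) - 1) /
              (edgeCliqueNum (supportGraph μ) u v : ℝ)) * μ u v ^ 2,
          fun u v => by dsimp only; rw [edgeCliqueNum_comm, hsym]⟩ e) := by
  have hμ : ∀ u v, ¬(supportGraph μ).Adj u v → μ u v = 0 := by
    intro u v h
    by_cases huv : u = v
    · exact huv ▸ hdiag u
    · by_contra hne
      exact h ⟨huv, Or.inl hne⟩
  rw [← SimpleGraph.sum_adj_eq_two_mul_sum_edgeFinset]
  exact Real.sSup_le (fun r hr => (supportGraph μ).le_sqrt_of_mem_spectrum μ hμ hr)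
    (Real.sqrt_nonneg _)
end

section
/- Let G be a finite simple graph with at least one edge and clique number ω = ω(G). Then for every integer r ≥ 1, λ₁(G)^r ≤ (1 − 1/ω) · w_r(G). -/
open Matrix Finset

section Spectrum

variable {n : Type*} [Fintype n] [DecidableEq n]

theorem Matrix.norm_le_sum_norm_of_mem_spectrum {K : Type*} [NormedField K] {A : Matrix n n K}
    {μ : K} (hμ : μ ∈ spectrum K A) : ‖μ‖ ≤ ∑ i, ∑ j, ‖A i j‖ := by
  rw [← Matrix.spectrum_toLin', ← Module.End.hasEigenvalue_iff_mem_spectrum] at hμ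
  obtain ⟨k, hk⟩ := eigenvalue_mem_ball hμ
  calc ‖μ‖ ≤ ‖A k k‖ + ‖μ - A k k‖ := norm_le_norm_add_norm_sub' μ (A k k)
    _ ≤ ‖A k k‖ + ∑ j ∈ univ.erase k, ‖A k j‖ := by
        gcongr; rwa [Metric.mem_closedBall, dist_eq_norm] at hk
    _ = ∑ j, ‖A k j‖ := add_sum_erase _ (fun j => ‖A k j‖) (mem_univ k)
    _ ≤ ∑ i, ∑ j, ‖A i j‖ :=
        single_le_sum (f := fun i => ∑ j, ‖A i j‖) (fun i _ => by positivity) (mem_univ k)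

theorem Matrix.IsHermitian.lam1_mem_spectrum [Nonempty n] {A : Matrix n n ℝ}
    (hA : A.IsHermitian) : lam1 A ∈ spectrum ℝ A := by
  rw [lam1, hA.spectrum_real_eq_range_eigenvalues]
  exact (Set.range_nonempty _).csSup_mem (Set.finite_range _)

theorem Matrix.IsHermitian.lam1_pow_le_sum_pow_apply [Nonempty n] {A : Matrix n n ℝ}
    (hA : A.IsHermitian) (hA₀ : ∀ i j, 0 ≤ A i j) (k : ℕ) :
    lam1 A ^ k ≤ ∑ i, ∑ j, (A ^ k) i j := by
  have h := norm_le_sum_norm_of_mem_spectrum (spectrum.pow_mem_pow A k hA.lam1_mem_spectrum)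
  simp only [Real.norm_eq_abs, abs_of_nonneg (pow_apply_nonneg hA₀ k _ _)] at h
  exact (le_abs_self _).trans h

end Spectrum

theorem le_of_forall_pow_two_pow_le {a b K : ℝ} (hb : 0 ≤ b)
    (h : ∀ t : ℕ, a ^ 2 ^ t ≤ K * b ^ 2 ^ t) : a ≤ b := by
  obtain rfl | hb := hb.eq_or_lt
  · simpa using h 0
  by_contra! hab
  have hρ : 1 < a / b := (one_lt_div hb).mpr hab
  obtain ⟨t, ht⟩ := pow_unbounded_of_one_lt K hρ
  have hK : (a / b) ^ 2 ^ t ≤ K := by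
    rw [div_pow, div_le_iff₀ (by positivity)]
    exact h t
  linarith [pow_le_pow_right₀ hρ.le (Nat.lt_two_pow_self (n := t)).le]

theorem pow_succ_le_of_doubling {W : ℕ → ℝ} {x c K : ℝ} (hc : 0 < c) (hK : 0 ≤ K)
    (hW : ∀ k, 0 ≤ W k) (hdouble : ∀ k, W (2 * k + 1) ≤ c * W k ^ 2)
    (hbase : ∀ k, x ^ (k + 1) ≤ K * W k) (k : ℕ) : x ^ (k + 1) ≤ c * W k := by
  suffices h : ∀ t k, (x ^ (k + 1)) ^ 2 ^ t ≤ K / c * (c * W k) ^ 2 ^ t from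
    le_of_forall_pow_two_pow_le (mul_nonneg hc.le (hW k)) fun t => h t k
  intro t
  induction t with
  | zero =>
    intro k
    have hKc : K / c * (c * W k) = K * W k := by field_simp
    simpa only [pow_zero, pow_one, hKc] using hbase k
  | succ t ih =>
    intro k
    calc (x ^ (k + 1)) ^ 2 ^ (t + 1) = (x ^ (2 * k + 1 + 1)) ^ 2 ^ t := by ring
      _ ≤ K / c * (c * W (2 * k + 1)) ^ 2 ^ t := ih (2 * k + 1)
      _ ≤ K / c * (c * (c * W k ^ 2)) ^ 2 ^ t := by
          gcongr
          · exact mul_nonneg hc.le (hW _)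
          · exact hdouble k
      _ = K / c * (c * W k) ^ 2 ^ (t + 1) := by ring

section TransferWeight

variable {V : Type*} [DecidableEq V]

def transferWeight (x : V → ℝ) (v u : V) : V → ℝ :=
  x + Pi.single u (x v) - Pi.single v (x v)

variable {x : V → ℝ} {u v : V}

theorem transferWeight_nonneg (hx : 0 ≤ x) : 0 ≤ transferWeight x v u := by
  intro i
  simp only [transferWeight, Pi.add_apply, Pi.sub_apply, Pi.single_apply, Pi.zero_apply]
  have hxi : 0 ≤ x i := hx i
  have hxv : 0 ≤ x v := hx v
  split_ifs <;> subst_vars <;> linarith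

variable [Fintype V]

theorem sum_transferWeight : ∑ i, transferWeight x v u i = ∑ i, x i := by
  simp [transferWeight, sum_add_distrib, sum_sub_distrib]

theorem card_support_transferWeight_lt (huv : u ≠ v) (hu : x u ≠ 0) (hv : x v ≠ 0) :
    #{i | transferWeight x v u i ≠ 0} < #{i | x i ≠ 0} := by
  refine (card_le_card fun i hi => ?_).trans_lt (card_erase_lt_of_mem (by simpa using hv))
  simp only [mem_filter, mem_univ, true_and, mem_erase] at hi ⊢
  by_cases hiv : i = v
  · subst hiv; simp [transferWeight, huv] at hi
  by_cases hiu : i = u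
  · exact ⟨hiv, hiu ▸ hu⟩
  · simpa [transferWeight, hiu, hiv] using hi

end TransferWeight

namespace SimpleGraph

theorem two_le_cliqueNum {V : Type*} [Finite V] {G : SimpleGraph V} {u v : V} (huv : G.Adj u v) :
    2 ≤ G.cliqueNum := by
  classical
  have hpair : G.IsClique ({u, v} : Finset V) := by
    rw [coe_pair, isClique_pair]
    exact fun _ => huv
  exact (card_pair huv.ne).symm.trans_le (IsClique.card_le_cliqueNum (tc := hpair))

theorem adjMatrix_apply_nonneg {α : Type*} [Zero α] [One α] [Preorder α] [ZeroLEOneClass α]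
    {V : Type*} (G : SimpleGraph V) [DecidableRel G.Adj] (i j : V) : 0 ≤ G.adjMatrix α i j := by
  rw [adjMatrix_apply]
  split_ifs
  exacts [zero_le_one, le_rfl]

variable {V : Type*} [Fintype V] [DecidableEq V] (G : SimpleGraph V) [DecidableRel G.Adj]

theorem dotProduct_adjMatrix_mulVec_of_isClique_support {x : V → ℝ}
    (hx : ∀ u v, u ≠ v → x u ≠ 0 → x v ≠ 0 → G.Adj u v) :
    x ⬝ᵥ G.adjMatrix ℝ *ᵥ x = (∑ i, x i) ^ 2 - ∑ i, x i ^ 2 := by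
  have hterm : ∀ i j, (if G.Adj i j then x i * x j else 0) =
      x i * x j - if i = j then x i * x j else 0 := by
    intro i j
    by_cases hij : i = j
    · simp [hij]
    by_cases hadj : G.Adj i j
    · simp [hij, hadj]
    have : x i = 0 ∨ x j = 0 := by by_contra! h; exact hadj (hx i j hij h.1 h.2)
    rcases this with h | h <;> simp [hij, hadj, h]
  simp only [dotProduct_mulVec_adjMatrix, hterm, sum_sub_distrib, sum_ite_eq, mem_univ,
    if_true, sq, sum_mul_sum]

theorem dotProduct_adjMatrix_mulVec_le_of_isClique_support {x : V → ℝ}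
    (hx : ∀ u v, u ≠ v → x u ≠ 0 → x v ≠ 0 → G.Adj u v) :
    x ⬝ᵥ G.adjMatrix ℝ *ᵥ x ≤ (1 - 1 / G.cliqueNum) * (∑ i, x i) ^ 2 := by
  set s : Finset V := {i | x i ≠ 0}
  have hs : G.IsClique (s : Set V) := fun u hu v hv huv =>
    hx u v huv (mem_filter.mp hu).2 (mem_filter.mp hv).2
  have hsum : ∀ f : V → ℝ, (∀ i, x i = 0 → f i = 0) → ∑ i ∈ s, f i = ∑ i, f i := fun f hf =>
    sum_subset (subset_univ s) fun i _ hi => hf i (by simpa [s] using hi)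
  have hCS : (∑ i, x i) ^ 2 ≤ G.cliqueNum * ∑ i, x i ^ 2 := by
    rw [← hsum x fun _ => id, ← hsum (x · ^ 2) fun _ h => by simp [h]]
    refine sq_sum_le_card_mul_sum_sq.trans ?_
    gcongr
    exact_mod_cast IsClique.card_le_cliqueNum (tc := hs)
  rw [dotProduct_adjMatrix_mulVec_of_isClique_support G hx]
  rcases (Nat.cast_nonneg (α := ℝ) G.cliqueNum).eq_or_lt with hω | hω
  · simp only [← hω, div_zero, sub_zero, one_mul, sub_le_self_iff]
    positivity
  · have : (∑ i, x i) ^ 2 / G.cliqueNum ≤ ∑ i, x i ^ 2 := (div_le_iff₀' hω).mpr hCS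
    rw [one_sub_mul, one_div_mul_eq_div]
    linarith

theorem dotProduct_adjMatrix_mulVec_le_transferWeight {x : V → ℝ} {u v : V}
    (hnadj : ¬ G.Adj u v) (hv : 0 ≤ x v)
    (hle : (G.adjMatrix ℝ *ᵥ x) v ≤ (G.adjMatrix ℝ *ᵥ x) u) :
    x ⬝ᵥ G.adjMatrix ℝ *ᵥ x ≤
      transferWeight x v u ⬝ᵥ G.adjMatrix ℝ *ᵥ transferWeight x v u := by
  set A := G.adjMatrix ℝ
  set d : V → ℝ := Pi.single u (x v) - Pi.single v (x v)
  have hxd : transferWeight x v u = x + d := add_sub_assoc _ _ _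
  have hsymm : x ⬝ᵥ A *ᵥ d = d ⬝ᵥ A *ᵥ x := by
    rw [dotProduct_mulVec, ← mulVec_transpose, transpose_adjMatrix, dotProduct_comm]
  have hdx : d ⬝ᵥ A *ᵥ x = x v * ((A *ᵥ x) u - (A *ᵥ x) v) := by
    simp only [d, sub_dotProduct, single_dotProduct]; ring
  have hdd : d ⬝ᵥ A *ᵥ d = 0 := by
    simp [d, A, mulVec_sub, mulVec_single, sub_dotProduct, single_dotProduct, adjMatrix_apply,
      hnadj, G.adj_comm v u]
  rw [hxd, mulVec_add, dotProduct_add, add_dotProduct, add_dotProduct, hsymm, hdd, hdx]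
  nlinarith [mul_nonneg hv (sub_nonneg.mpr hle)]

/-- Motzkin–Straus. Moving the weight of `v` onto a non-neighbour `u` with `(A x)ᵥ ≤ (A x)ᵤ`
does not decrease the form and shrinks the support, so it suffices to treat clique supports. -/
theorem dotProduct_adjMatrix_mulVec_le_of_nonneg {x : V → ℝ} (hx : 0 ≤ x) :
    x ⬝ᵥ G.adjMatrix ℝ *ᵥ x ≤ (1 - 1 / G.cliqueNum) * (∑ i, x i) ^ 2 := by
  induction hN : #{i | x i ≠ 0} using Nat.strong_induction_on generalizing x with
  | _ N ih =>
  by_cases hclique : ∀ u v, u ≠ v → x u ≠ 0 → x v ≠ 0 → G.Adj u v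
  · exact G.dotProduct_adjMatrix_mulVec_le_of_isClique_support hclique
  push Not at hclique
  obtain ⟨u, v, huv, hu, hv, hnadj⟩ := hclique
  wlog hle : (G.adjMatrix ℝ *ᵥ x) v ≤ (G.adjMatrix ℝ *ᵥ x) u generalizing u v
  · exact this v u huv.symm hv hu (mt G.adj_symm hnadj) (le_of_not_ge hle)
  calc x ⬝ᵥ G.adjMatrix ℝ *ᵥ x
      ≤ transferWeight x v u ⬝ᵥ G.adjMatrix ℝ *ᵥ transferWeight x v u :=
        G.dotProduct_adjMatrix_mulVec_le_transferWeight hnadj (hx v) hle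
    _ ≤ (1 - 1 / G.cliqueNum) * (∑ i, transferWeight x v u i) ^ 2 :=
        ih _ (hN ▸ card_support_transferWeight_lt huv hu hv) (transferWeight_nonneg hx) rfl
    _ = (1 - 1 / G.cliqueNum) * (∑ i, x i) ^ 2 := by rw [sum_transferWeight]

/-- The number of walks with `k` edges, that is, with `k + 1` vertices. -/
noncomputable def numWalks (k : ℕ) : ℝ := 1 ⬝ᵥ G.adjMatrix ℝ ^ k *ᵥ 1

theorem sum_walkCount (k : ℕ) : ∑ v, walkCount G (k + 1) v = G.numWalks k :=
  (one_dotProduct _).symm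

theorem adjMatrix_pow_mulVec_one_nonneg (k : ℕ) : 0 ≤ G.adjMatrix ℝ ^ k *ᵥ 1 := fun i =>
  sum_nonneg fun j _ => mul_nonneg (pow_apply_nonneg G.adjMatrix_apply_nonneg k i j) zero_le_one

theorem numWalks_nonneg (k : ℕ) : 0 ≤ G.numWalks k := by
  rw [numWalks, one_dotProduct]
  exact sum_nonneg fun i _ => G.adjMatrix_pow_mulVec_one_nonneg k i

theorem numWalks_eq_sum (k : ℕ) : G.numWalks k = ∑ i, ∑ j, (G.adjMatrix ℝ ^ k) i j := by
  simp [numWalks, mulVec, dotProduct]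

theorem numWalks_succ_le (k : ℕ) : G.numWalks (k + 1) ≤ Fintype.card V * G.numWalks k := by
  set y := G.adjMatrix ℝ ^ k *ᵥ 1
  have hy := G.adjMatrix_pow_mulVec_one_nonneg k
  calc G.numWalks (k + 1) = ∑ i : V, ∑ j, if G.Adj i j then y j else 0 := by
        simp [numWalks, pow_succ', ← mulVec_mulVec, dotProduct_mulVec_adjMatrix, y]
    _ ≤ ∑ _i : V, ∑ j, y j := by
        gcongr with i _ j _
        split_ifs
        exacts [le_rfl, hy j]
    _ = Fintype.card V * G.numWalks k := by
        simp [numWalks, one_dotProduct, y]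

theorem numWalks_two_mul_add_one_le (k : ℕ) :
    G.numWalks (2 * k + 1) ≤ (1 - 1 / G.cliqueNum) * G.numWalks k ^ 2 := by
  set A := G.adjMatrix ℝ
  set y := A ^ k *ᵥ 1
  have hy : y = 1 ᵥ* A ^ k := by rw [← mulVec_transpose, transpose_pow, transpose_adjMatrix]
  have hQ : G.numWalks (2 * k + 1) = y ⬝ᵥ A *ᵥ y := by
    rw [numWalks, show 2 * k + 1 = k + (k + 1) by ring, pow_add, pow_succ', ← mulVec_mulVec,
      ← mulVec_mulVec, dotProduct_mulVec, ← hy]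
  rw [hQ, numWalks, one_dotProduct]
  exact G.dotProduct_adjMatrix_mulVec_le_of_nonneg (G.adjMatrix_pow_mulVec_one_nonneg k)

theorem lam1_adjMatrix_pow_le_numWalks [Nonempty V] (k : ℕ) :
    lam1 (G.adjMatrix ℝ) ^ k ≤ G.numWalks k := by
  rw [numWalks_eq_sum]
  exact (G.isHermitian_adjMatrix ℝ).lam1_pow_le_sum_pow_apply G.adjMatrix_apply_nonneg k

end SimpleGraph

/-- Nikiforov's walk inequality: for a graph `G` with at least one edge and clique
number `ω`, and every integer `r ≥ 1`, `λ₁(G)^r ≤ (1 - 1/ω) w_r(G)`. -/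
theorem nikiforov_walk_inequality
    {V : Type*} [Fintype V] [DecidableEq V] (G : SimpleGraph V) [DecidableRel G.Adj]
    (hedge : ∃ u v, G.Adj u v) (r : ℕ) (hr : 1 ≤ r) :
    lam1 (G.adjMatrix ℝ) ^ r ≤
      (1 - 1 / (cliqueNumber G : ℝ)) * ∑ v : V, walkCount G r v := by
  obtain ⟨u, v, huv⟩ := hedge
  have : Nonempty V := ⟨u⟩
  have hω : (2 : ℝ) ≤ G.cliqueNum := by exact_mod_cast G.two_le_cliqueNum huv
  have hc : 0 < 1 - 1 / (G.cliqueNum : ℝ) := by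
    rw [sub_pos, div_lt_one (by linarith)]
    linarith
  obtain ⟨k, rfl⟩ := Nat.exists_eq_add_of_le' hr
  rw [G.sum_walkCount]
  exact pow_succ_le_of_doubling hc (Nat.cast_nonneg _) G.numWalks_nonneg
    G.numWalks_two_mul_add_one_le
    (fun k => (G.lam1_adjMatrix_pow_le_numWalks (k + 1)).trans (G.numWalks_succ_le k)) k
end
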